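/- arXiv:2209.04652 — 13 statements merged into one kernel-verified Lean document; each statement's English description precedes it below -/
import Mathlib

section
/- In a finite-dimensional real normed space, the set of unit vectors x admitting an inner ellipsoid (a Euclidean ball for some inner-product norm, contained in the unit ball, containing x in its boundary) is dense in the unit sphere. -/
/-!
Fix a Euclidean structure `L : X ≃L[ℝ] F` and a unit vector `x`, and let `M` be `L` followed by
the orthogonal projection onto `(L x)ᗮ`. For large `t`, the positive definite quadratic form
`‖L z‖² + t ‖M z‖²` attains its minimum over the unit sphere of `X` at some `y`; rescaled so that
it takes the value `1` at `y`, it defines an inner ellipsoid at `y`. Comparing with its value at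
`x` forces `‖M y‖ = O(t^{-1/2})`, so `y` is close to a multiple of `x`, hence to `x` or `-x`.
-/

open Metric
open scoped InnerProductSpace

/-- `x` admits an inner ellipsoid. -/
def InnerEllipsoidAt (X : Type*) [NormedAddCommGroup X] [NormedSpace ℝ X] (x : X) : Prop :=
  ∃ B : LinearMap.BilinForm ℝ X, (∀ z w : X, B z w = B w z) ∧
    (∀ z : X, ‖z‖ ^ 2 ≤ B z z) ∧ B x x = 1

section

variable {X F : Type*} [NormedAddCommGroup X] [NormedSpace ℝ X]
  [NormedAddCommGroup F] [InnerProductSpace ℝ F]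

theorem InnerEllipsoidAt.neg {y : X} (hy : InnerEllipsoidAt X y) : InnerEllipsoidAt X (-y) := by
  obtain ⟨B, hsymm, hle, hyy⟩ := hy
  exact ⟨B, hsymm, hle, by simpa using hyy⟩

theorem LinearMap.BilinForm.apply_smul_smul_self (B : LinearMap.BilinForm ℝ X) (c : ℝ) (z : X) :
    B (c • z) (c • z) = c ^ 2 * B z z := by
  simp only [map_smul, LinearMap.smul_apply, smul_eq_mul]
  ring

theorem mul_norm_sq_le_of_isMinOn {B : LinearMap.BilinForm ℝ X} {y : X}
    (hmin : IsMinOn (fun z => B z z) (sphere 0 1) y) (z : X) :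
    B y y * ‖z‖ ^ 2 ≤ B z z := by
  rcases eq_or_ne z 0 with rfl | hz
  · simp
  have hz' : 0 < ‖z‖ := norm_pos_iff.mpr hz
  have hunit : ‖z‖⁻¹ • z ∈ sphere (0 : X) 1 := by
    rw [mem_sphere_zero_iff_norm, norm_smul, norm_inv, norm_norm, inv_mul_cancel₀ hz'.ne']
  have h := isMinOn_iff.mp hmin _ hunit
  rwa [B.apply_smul_smul_self, inv_pow, inv_mul_eq_div, le_div_iff₀ (by positivity)] at h

theorem innerEllipsoidAt_of_isMinOn {B : LinearMap.BilinForm ℝ X}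
    (hsymm : ∀ z w, B z w = B w z) (hpos : ∀ z ≠ 0, 0 < B z z) {y : X} (hy : ‖y‖ = 1)
    (hmin : IsMinOn (fun z => B z z) (sphere 0 1) y) : InnerEllipsoidAt X y := by
  have hm : 0 < B y y := hpos y (norm_ne_zero_iff.mp (by rw [hy]; exact one_ne_zero))
  refine ⟨(B y y)⁻¹ • B, fun z w => by simp only [LinearMap.smul_apply, hsymm z w],
    fun z => ?_, by simp only [LinearMap.smul_apply, smul_eq_mul, inv_mul_cancel₀ hm.ne']⟩
  rw [LinearMap.smul_apply, LinearMap.smul_apply, smul_eq_mul, le_inv_mul_iff₀ hm]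
  exact mul_norm_sq_le_of_isMinOn hmin z

theorem exists_innerEllipsoidAt_apply_self_le [ProperSpace X] {B : LinearMap.BilinForm ℝ X}
    (hsymm : ∀ z w, B z w = B w z) (hpos : ∀ z ≠ 0, 0 < B z z)
    (hcont : Continuous fun z => B z z) {x : X} (hx : ‖x‖ = 1) :
    ∃ y : X, ‖y‖ = 1 ∧ B y y ≤ B x x ∧ InnerEllipsoidAt X y := by
  have hxS : x ∈ sphere (0 : X) 1 := mem_sphere_zero_iff_norm.mpr hx
  obtain ⟨y, hyS, hmin⟩ := (isCompact_sphere (0 : X) 1).exists_isMinOn ⟨x, hxS⟩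
    hcont.continuousOn
  have hy : ‖y‖ = 1 := mem_sphere_zero_iff_norm.mp hyS
  exact ⟨y, hy, isMinOn_iff.mp hmin x hxS, innerEllipsoidAt_of_isMinOn hsymm hpos hy hmin⟩

theorem norm_sub_le_two_mul_norm_sub_smul {x y : X} (hx : ‖x‖ = 1) (hy : ‖y‖ = 1) {c : ℝ}
    (hc : 0 ≤ c) : ‖y - x‖ ≤ 2 * ‖y - c • x‖ := by
  have hcx : ‖c • x‖ = c := by rw [norm_smul, hx, mul_one, Real.norm_of_nonneg hc]
  have hc1 : |c - 1| ≤ ‖y - c • x‖ := by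
    simpa only [hcx, hy, norm_sub_rev (c • x)] using abs_norm_sub_norm_le (c • x) y
  calc ‖y - x‖ = ‖(y - c • x) + (c - 1) • x‖ := by rw [sub_smul, one_smul]; abel_nf
    _ ≤ ‖y - c • x‖ + |c - 1| := by
      refine (norm_add_le _ _).trans_eq ?_
      rw [norm_smul, hx, mul_one, Real.norm_eq_abs]
    _ ≤ 2 * ‖y - c • x‖ := by linarith

theorem norm_sub_le_or_norm_neg_sub_le {x y : X} (hx : ‖x‖ = 1) (hy : ‖y‖ = 1) (c : ℝ) :
    ‖y - x‖ ≤ 2 * ‖y - c • x‖ ∨ ‖-y - x‖ ≤ 2 * ‖y - c • x‖ := by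
  rcases le_total 0 c with hc | hc
  · exact .inl (norm_sub_le_two_mul_norm_sub_smul hx hy hc)
  · right
    have h := norm_sub_le_two_mul_norm_sub_smul hx (by rwa [norm_neg]) (neg_nonneg.mpr hc)
    rwa [neg_smul, sub_neg_eq_add, neg_add_eq_sub, ← norm_neg (c • x - y), neg_sub] at h

theorem exists_sub_smul_eq_symm_starProjection (L : X ≃L[ℝ] F) (x y : X) :
    ∃ c : ℝ, y - c • x = L.symm ((ℝ ∙ L x)ᗮ.starProjection (L y)) :=
  ⟨⟪L x, L y⟫_ℝ / ‖L x‖ ^ 2, by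
    rw [Submodule.starProjection_orthogonal_val, Submodule.starProjection_singleton, map_sub,
      map_smul, L.symm_apply_apply, L.symm_apply_apply]; rfl⟩

noncomputable def innerPullback (T : X →L[ℝ] F) : LinearMap.BilinForm ℝ X :=
  (innerₗ F).compl₁₂ (T : X →ₗ[ℝ] F) (T : X →ₗ[ℝ] F)

theorem innerPullback_comm (T : X →L[ℝ] F) (z w : X) :
    innerPullback T z w = innerPullback T w z :=
  real_inner_comm _ _

theorem innerPullback_self (T : X →L[ℝ] F) (z : X) : innerPullback T z z = ‖T z‖ ^ 2 :=
  real_inner_self_eq_norm_sq _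

theorem exists_innerEllipsoidAt_of_pullback_le [ProperSpace X] (L : X ≃L[ℝ] F) (M : X →L[ℝ] F)
    {t : ℝ} (ht : 0 ≤ t) {x : X} (hx : ‖x‖ = 1) :
    ∃ y : X, ‖y‖ = 1 ∧ ‖L y‖ ^ 2 + t * ‖M y‖ ^ 2 ≤ ‖L x‖ ^ 2 + t * ‖M x‖ ^ 2 ∧
      InnerEllipsoidAt X y := by
  let B := innerPullback L.toContinuousLinearMap + t • innerPullback M
  have hB : ∀ z, B z z = ‖L z‖ ^ 2 + t * ‖M z‖ ^ 2 := fun z => by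
    simp only [B, LinearMap.add_apply, LinearMap.smul_apply, innerPullback_self, smul_eq_mul,
      ContinuousLinearEquiv.coe_coe]
  have hsymm : ∀ z w, B z w = B w z := fun z w => by
    simp only [B, LinearMap.add_apply, LinearMap.smul_apply]
    rw [innerPullback_comm _ z, innerPullback_comm M z]
  have hpos : ∀ z ≠ 0, 0 < B z z := fun z hz => by
    have hLz : 0 < ‖L z‖ := norm_pos_iff.mpr ((map_ne_zero_iff L L.injective).mpr hz)
    rw [hB]
    positivity
  simp only [← hB]
  exact exists_innerEllipsoidAt_apply_self_le hsymm hpos (by simp only [hB]; fun_prop) hx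

theorem exists_innerEllipsoidAt_mul_sq_norm_sub_le [ProperSpace X] (L : X ≃L[ℝ] F) {t : ℝ}
    (ht : 0 ≤ t) {x : X} (hx : ‖x‖ = 1) :
    ∃ y : X, ‖y‖ = 1 ∧ t * ‖y - x‖ ^ 2 ≤ (2 * ‖L.symm.toContinuousLinearMap‖ * ‖L x‖) ^ 2 ∧
      InnerEllipsoidAt X y := by
  set C := ‖L.symm.toContinuousLinearMap‖
  let M := (ℝ ∙ L x)ᗮ.starProjection ∘L L.toContinuousLinearMap
  have hMx : M x = 0 := by
    show (ℝ ∙ L x)ᗮ.starProjection (L x) = 0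
    rw [Submodule.starProjection_orthogonal_val,
      Submodule.starProjection_eq_self_iff.mpr (Submodule.mem_span_singleton_self _), sub_self]
  obtain ⟨y, hy, hBy, hyE⟩ := exists_innerEllipsoidAt_of_pullback_le L M ht hx
  have hMy : t * ‖M y‖ ^ 2 ≤ ‖L x‖ ^ 2 := by
    rw [hMx, norm_zero] at hBy
    nlinarith [sq_nonneg ‖L y‖]
  obtain ⟨c, hc⟩ := exists_sub_smul_eq_symm_starProjection L x y
  have hyc : ‖y - c • x‖ ≤ C * ‖M y‖ := hc ▸ L.symm.toContinuousLinearMap.le_opNorm (M y)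
  suffices key : ∀ y' : X, ‖y' - x‖ ≤ 2 * ‖y - c • x‖ → t * ‖y' - x‖ ^ 2 ≤ (2 * C * ‖L x‖) ^ 2 by
    rcases norm_sub_le_or_norm_neg_sub_le hx hy c with h | h
    · exact ⟨y, hy, key y h, hyE⟩
    · exact ⟨-y, by rwa [norm_neg], key (-y) h, hyE.neg⟩
  intro y' hy'
  calc t * ‖y' - x‖ ^ 2 ≤ t * (2 * (C * ‖M y‖)) ^ 2 := by gcongr; linarith
    _ = (2 * C) ^ 2 * (t * ‖M y‖ ^ 2) := by ring
    _ ≤ (2 * C) ^ 2 * ‖L x‖ ^ 2 := by gcongr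
    _ = (2 * C * ‖L x‖) ^ 2 := by ring

end

/-- In a finite-dimensional real normed space, the unit vectors admitting inner ellipsoids
are dense in the unit sphere. -/
theorem stmt4 (X : Type*) [NormedAddCommGroup X] [NormedSpace ℝ X] [FiniteDimensional ℝ X] :
    ∀ x : X, ‖x‖ = 1 → ∀ ε : ℝ, 0 < ε →
      ∃ y : X, ‖y‖ = 1 ∧ ‖y - x‖ < ε ∧ InnerEllipsoidAt X y := by
  intro x hx ε hε
  let L := toEuclidean (E := X)
  set D := 2 * ‖L.symm.toContinuousLinearMap‖ * ‖L x‖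
  obtain ⟨t, ht, htε⟩ : ∃ t : ℝ, 0 < t ∧ D ^ 2 < t * ε ^ 2 :=
    ⟨(D / ε) ^ 2 + 1, by positivity, by field_simp; nlinarith [sq_nonneg ε]⟩
  obtain ⟨y, hy, hyx, hyE⟩ := exists_innerEllipsoidAt_mul_sq_norm_sub_le L ht.le hx
  have hsq : ‖y - x‖ ^ 2 < ε ^ 2 := lt_of_mul_lt_mul_left (hyx.trans_lt htε) ht.le
  exact ⟨y, hy, lt_of_pow_lt_pow_left₀ 2 hε.le hsq, hyE⟩
end

section
/- Let X be a finite-dimensional real normed space, let x be a unit vector admitting an outer ellipsoid, and let y be a unit vector admitting an inner ellipsoid. Then there exists a contractive automorphism T of X with T x = y. -/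
/-- `x` admits an outer ellipsoid. -/
def OuterEllipsoidAt (X : Type*) [NormedAddCommGroup X] [NormedSpace ℝ X] (x : X) : Prop :=
  ∃ B : LinearMap.BilinForm ℝ X, (∀ z w : X, B z w = B w z) ∧
    (∀ z : X, z ≠ 0 → 0 < B z z) ∧ (∀ z : X, B z z ≤ ‖z‖ ^ 2) ∧ B x x = 1

/-!
Both ellipsoids are unit balls of Euclidean norms `√(B₁ z z)` (outer, at `x`) and `√(B₂ z z)`
(inner, at `y`). Any two Euclidean structures on `X` are isometric, and after composing with a
reflection the isometry `(X, B₁) → (X, B₂)` sends the `B₁`-unit vector `x` to the `B₂`-unit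
vector `y`. It is contractive for `‖·‖` because `‖T z‖² ≤ B₂ (T z) (T z) = B₁ z z ≤ ‖z‖²`.
-/

open LinearMap (BilinForm)
open Module (finrank)

namespace LinearMap.BilinForm

variable {X : Type*} [AddCommGroup X] [Module ℝ X]

noncomputable abbrev innerProductCore (B : BilinForm ℝ X) (hs : ∀ z w : X, B z w = B w z)
    (hp : ∀ z : X, z ≠ 0 → 0 < B z z) : InnerProductSpace.Core ℝ X where
  inner z w := B z w
  conj_inner_symm z w := by simpa using hs w z
  re_inner_nonneg z := by
    rcases eq_or_ne z 0 with rfl | hz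
    · simp
    · simpa using (hp z hz).le
  add_left := LinearMap.map_add₂ B
  smul_left z w r := LinearMap.map_smul₂ B r z w
  definite z h := by
    by_contra hz
    exact (hp z hz).ne' (by simpa using h)

theorem exists_linearEquiv_euclideanSpace [FiniteDimensional ℝ X] (B : BilinForm ℝ X)
    (hs : ∀ z w : X, B z w = B w z) (hp : ∀ z : X, z ≠ 0 → 0 < B z z) :
    ∃ L : X ≃ₗ[ℝ] EuclideanSpace ℝ (Fin (finrank ℝ X)), ∀ z, B z z = ‖L z‖ ^ 2 := by
  let : NormedAddCommGroup X := (innerProductCore B hs hp).toNormedAddCommGroup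
  let : InnerProductSpace ℝ X := .ofCore _
  refine ⟨(stdOrthonormalBasis ℝ X).repr.toLinearEquiv, fun z => ?_⟩
  rw [LinearIsometryEquiv.coe_toLinearEquiv, LinearIsometryEquiv.norm_map,
    ← real_inner_self_eq_norm_sq]
  rfl

theorem exists_linearEquiv_map_eq [FiniteDimensional ℝ X] {B₁ B₂ : BilinForm ℝ X}
    (hs₁ : ∀ z w : X, B₁ z w = B₁ w z) (hp₁ : ∀ z : X, z ≠ 0 → 0 < B₁ z z)
    (hs₂ : ∀ z w : X, B₂ z w = B₂ w z) (hp₂ : ∀ z : X, z ≠ 0 → 0 < B₂ z z)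
    {u v : X} (huv : B₁ u u = B₂ v v) :
    ∃ T : X ≃ₗ[ℝ] X, (∀ z, B₂ (T z) (T z) = B₁ z z) ∧ T u = v := by
  obtain ⟨L₁, hL₁⟩ := exists_linearEquiv_euclideanSpace B₁ hs₁ hp₁
  obtain ⟨L₂, hL₂⟩ := exists_linearEquiv_euclideanSpace B₂ hs₂ hp₂
  have hnorm : ‖L₁ u‖ = ‖L₂ v‖ := by
    rw [← sq_eq_sq₀ (norm_nonneg _) (norm_nonneg _), ← hL₁, ← hL₂, huv]
  let R := (ℝ ∙ (L₁ u - L₂ v))ᗮ.reflection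
  refine ⟨L₁ ≪≫ₗ R.toLinearEquiv ≪≫ₗ L₂.symm, fun z => ?_, ?_⟩
  · simp [hL₁, hL₂]
  · simp [R, Submodule.reflection_sub hnorm]

end LinearMap.BilinForm

theorem stmt6_general (X : Type*) [NormedAddCommGroup X] [NormedSpace ℝ X] [FiniteDimensional ℝ X]
    (x y : X) (hox : OuterEllipsoidAt X x) (hiy : InnerEllipsoidAt X y) :
    ∃ T : X ≃L[ℝ] X, ‖(T : X →L[ℝ] X)‖ ≤ 1 ∧ T x = y := by
  obtain ⟨B₁, hs₁, hp₁, hle₁, hB₁x⟩ := hox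
  obtain ⟨B₂, hs₂, hge₂, hB₂y⟩ := hiy
  have hp₂ : ∀ z : X, z ≠ 0 → 0 < B₂ z z := fun z hz =>
    (pow_pos (norm_pos_iff.mpr hz) 2).trans_le (hge₂ z)
  obtain ⟨T, hT, hTx⟩ :=
    BilinForm.exists_linearEquiv_map_eq hs₁ hp₁ hs₂ hp₂ (hB₁x.trans hB₂y.symm)
  have hcontr : ∀ z : X, ‖T z‖ ≤ ‖z‖ := fun z => by
    refine (pow_le_pow_iff_left₀ (norm_nonneg _) (norm_nonneg _) two_ne_zero).mp ?_
    calc ‖T z‖ ^ 2 ≤ B₂ (T z) (T z) := hge₂ _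
      _ = B₁ z z := hT z
      _ ≤ ‖z‖ ^ 2 := hle₁ z
  exact ⟨T.toContinuousLinearEquiv,
    ContinuousLinearMap.opNorm_le_bound _ zero_le_one (by simpa using hcontr), hTx⟩

/-- If `x` is a unit vector admitting an outer ellipsoid and `y` a unit vector admitting an
inner ellipsoid, then some contractive automorphism sends `x` to `y`. -/
theorem stmt6 (X : Type*) [NormedAddCommGroup X] [NormedSpace ℝ X] [FiniteDimensional ℝ X]
    (x y : X) (hx : ‖x‖ = 1) (hy : ‖y‖ = 1)
    (hox : OuterEllipsoidAt X x) (hiy : InnerEllipsoidAt X y) :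
    ∃ T : X ≃L[ℝ] X, ‖(T : X →L[ℝ] X)‖ ≤ 1 ∧ T x = y :=
  stmt6_general X x y hox hiy
end

section
/- A finite-dimensional real normed space X is semitransitive (for all unit vectors x, y there is a contractive automorphism T with T x = y) if and only if every point of the unit sphere admits both an inner ellipsoid and an outer ellipsoid. -/
/-!
By Sylvester's law of inertia, an inner (outer) ellipsoid at `x` amounts to a linear isomorphism
`L` onto Euclidean space with `‖z‖ ≤ ‖L z‖` (resp. `‖L z‖ ≤ ‖z‖`) for all `z` and `‖L x‖ = 1`.
Given an outer ellipsoid `L₁` at `x` and an inner one `L₂` at `y`, the map `L₂⁻¹ ∘ R ∘ L₁`, with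
`R` a reflection taking `L₁ x` to `L₂ y`, is a contraction sending `x` to `y`. Conversely, a
Euclidean norm rescaled at a point of the unit sphere where it is minimal (maximal) gives an
inner (outer) ellipsoid there; contractive automorphisms push inner ellipsoids forward and pull
outer ellipsoids back, so semitransitivity spreads them over the whole sphere.
-/

open Module

theorem LinearMap.BilinForm.exists_linearEquiv_apply_self_eq_norm_sq {V : Type*}
    [AddCommGroup V] [Module ℝ V] [FiniteDimensional ℝ V] (B : LinearMap.BilinForm ℝ V)
    (hB : ∀ v, v ≠ 0 → 0 < B v v) :
    ∃ σ : V ≃ₗ[ℝ] EuclideanSpace ℝ (Fin (finrank ℝ V)), ∀ v, B v v = ‖σ v‖ ^ 2 := by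
  obtain ⟨w, hw, ⟨e⟩⟩ :=
    QuadraticForm.equivalent_one_zero_neg_one_weighted_sum_squared B.toQuadraticMap
  have hQ (v : V) : B v v = ∑ i, w i * (e v i * e v i) := by
    simpa using
      (e.map_app v).symm.trans (QuadraticMap.weightedSumSquares_apply w _)
  have hw_one (i : Fin (finrank ℝ V)) : w i = 1 := by
    have := hB (e.symm (Pi.single i 1)) (by simp)
    simp [hQ, Pi.single_apply] at this
    rcases hw i with h | h | h <;> linarith
  refine ⟨e.toLinearEquiv.trans (WithLp.linearEquiv 2 ℝ _).symm, fun v => ?_⟩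
  rw [hQ, EuclideanSpace.norm_sq_eq]
  simp [hw_one, sq]

section Extremal

variable {X E : Type*} [NormedAddCommGroup X] [NormedSpace ℝ X] [NormedAddCommGroup E]
  [NormedSpace ℝ E]

theorem ContinuousLinearMap.norm_apply_eq_norm_mul_norm_apply_inv_norm_smul (f : X →L[ℝ] E)
    (w : X) : ‖f w‖ = ‖w‖ * ‖f (‖w‖⁻¹ • w)‖ := by
  rcases eq_or_ne w 0 with rfl | hw
  · simp
  · rw [map_smul, norm_smul, norm_inv, norm_norm, ← mul_assoc,
      mul_inv_cancel₀ (norm_ne_zero_iff.2 hw), one_mul]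

variable [ProperSpace X] [Nontrivial X]

theorem ContinuousLinearMap.exists_norm_eq_one_forall_mul_norm_le (f : X →L[ℝ] E) :
    ∃ z : X, ‖z‖ = 1 ∧ ∀ w, ‖f z‖ * ‖w‖ ≤ ‖f w‖ := by
  obtain ⟨z, hz, hmin⟩ := (isCompact_sphere (0 : X) 1).exists_isMinOn
    (NormedSpace.sphere_nonempty.2 zero_le_one) f.continuous.norm.continuousOn
  refine ⟨z, by simpa using hz, fun w => ?_⟩
  rcases eq_or_ne w 0 with rfl | hw
  · simp
  · rw [f.norm_apply_eq_norm_mul_norm_apply_inv_norm_smul w, mul_comm]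
    exact mul_le_mul_of_nonneg_left (hmin (by simp [norm_smul, hw])) (norm_nonneg w)

theorem ContinuousLinearMap.exists_norm_eq_one_forall_norm_le_mul (f : X →L[ℝ] E) :
    ∃ z : X, ‖z‖ = 1 ∧ ∀ w, ‖f w‖ ≤ ‖f z‖ * ‖w‖ := by
  obtain ⟨z, hz, hmax⟩ := (isCompact_sphere (0 : X) 1).exists_isMaxOn
    (NormedSpace.sphere_nonempty.2 zero_le_one) f.continuous.norm.continuousOn
  refine ⟨z, by simpa using hz, fun w => ?_⟩
  rcases eq_or_ne w 0 with rfl | hw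
  · simp
  · rw [f.norm_apply_eq_norm_mul_norm_apply_inv_norm_smul w, mul_comm]
    exact mul_le_mul_of_nonneg_right (hmax (by simp [norm_smul, hw])) (norm_nonneg w)

end Extremal

section Ellipsoids

variable {X Y E : Type*} [NormedAddCommGroup X] [NormedSpace ℝ X]
  [NormedAddCommGroup Y] [NormedSpace ℝ Y] [NormedAddCommGroup E] [InnerProductSpace ℝ E]

theorem InnerEllipsoidAt.of_linearMap {x : X} (L : X →ₗ[ℝ] E) (hL : ∀ z, ‖z‖ ≤ ‖L z‖)
    (hx : ‖L x‖ = 1) : InnerEllipsoidAt X x := by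
  refine ⟨(innerₗ E).compl₁₂ L L, fun z w => real_inner_comm _ _, fun z => ?_, ?_⟩
  · simpa using pow_le_pow_left₀ (norm_nonneg z) (hL z) 2
  · simp [hx]

theorem OuterEllipsoidAt.of_linearMap {x : X} (L : X →ₗ[ℝ] E) (hinj : Function.Injective L)
    (hL : ∀ z, ‖L z‖ ≤ ‖z‖) (hx : ‖L x‖ = 1) : OuterEllipsoidAt X x := by
  refine ⟨(innerₗ E).compl₁₂ L L, fun z w => real_inner_comm _ _, fun z hz => ?_, fun z => ?_, ?_⟩
  · have hLz : L z ≠ 0 := fun h => hz (hinj (h.trans (map_zero L).symm))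
    simpa using pow_pos (norm_pos_iff.2 hLz) 2
  · simpa using pow_le_pow_left₀ (norm_nonneg _) (hL z) 2
  · simp [hx]

theorem InnerEllipsoidAt.exists_linearEquiv [FiniteDimensional ℝ X] {x : X}
    (h : InnerEllipsoidAt X x) :
    ∃ L : X ≃ₗ[ℝ] EuclideanSpace ℝ (Fin (finrank ℝ X)), (∀ z, ‖z‖ ≤ ‖L z‖) ∧ ‖L x‖ = 1 := by
  obtain ⟨B, -, hle, hx⟩ := h
  obtain ⟨L, hL⟩ := B.exists_linearEquiv_apply_self_eq_norm_sq fun z hz =>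
    (pow_pos (norm_pos_iff.2 hz) 2).trans_le (hle z)
  refine ⟨L, fun z => ?_, ?_⟩
  · exact (pow_le_pow_iff_left₀ (norm_nonneg _) (norm_nonneg _) two_ne_zero).1 (hL z ▸ hle z)
  · exact (pow_eq_one_iff_of_nonneg (norm_nonneg _) two_ne_zero).1 (hL x ▸ hx)

theorem OuterEllipsoidAt.exists_linearEquiv [FiniteDimensional ℝ X] {x : X}
    (h : OuterEllipsoidAt X x) :
    ∃ L : X ≃ₗ[ℝ] EuclideanSpace ℝ (Fin (finrank ℝ X)), (∀ z, ‖L z‖ ≤ ‖z‖) ∧ ‖L x‖ = 1 := by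
  obtain ⟨B, -, hpos, hle, hx⟩ := h
  obtain ⟨L, hL⟩ := B.exists_linearEquiv_apply_self_eq_norm_sq hpos
  refine ⟨L, fun z => ?_, ?_⟩
  · exact (pow_le_pow_iff_left₀ (norm_nonneg _) (norm_nonneg _) two_ne_zero).1 (hL z ▸ hle z)
  · exact (pow_eq_one_iff_of_nonneg (norm_nonneg _) two_ne_zero).1 (hL x ▸ hx)

theorem InnerEllipsoidAt.map {x : X} (h : InnerEllipsoidAt X x) (T : X ≃L[ℝ] Y)
    (hT : ‖(T : X →L[ℝ] Y)‖ ≤ 1) : InnerEllipsoidAt Y (T x) := by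
  obtain ⟨B, hsymm, hle, hx⟩ := h
  let S : Y →ₗ[ℝ] X := (T.symm : Y →L[ℝ] X)
  refine ⟨B.compl₁₂ S S, fun z w => hsymm _ _, fun z => ?_, by simpa [S] using hx⟩
  have hz : ‖z‖ ≤ ‖T.symm z‖ := by
    simpa using (T : X →L[ℝ] Y).le_of_opNorm_le hT (T.symm z)
  calc ‖z‖ ^ 2 ≤ ‖T.symm z‖ ^ 2 := pow_le_pow_left₀ (norm_nonneg z) hz 2
    _ ≤ B (T.symm z) (T.symm z) := hle _

theorem OuterEllipsoidAt.comap {x : X} (f : X →L[ℝ] Y) (hf : Function.Injective f)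
    (hf1 : ‖f‖ ≤ 1) (h : OuterEllipsoidAt Y (f x)) : OuterEllipsoidAt X x := by
  obtain ⟨B, hsymm, hpos, hle, hx⟩ := h
  refine ⟨B.compl₁₂ (f : X →ₗ[ℝ] Y) f, fun z w => hsymm _ _, fun z hz => ?_, fun z => ?_, hx⟩
  · exact hpos _ fun h => hz (hf (h.trans (map_zero f).symm))
  · have hz : ‖f z‖ ≤ ‖z‖ := by simpa using f.le_of_opNorm_le hf1 z
    exact (hle (f z)).trans (pow_le_pow_left₀ (norm_nonneg _) hz 2)

variable (X) [FiniteDimensional ℝ X] [Nontrivial X]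

theorem exists_innerEllipsoidAt : ∃ x : X, ‖x‖ = 1 ∧ InnerEllipsoidAt X x := by
  let e := toEuclidean (E := X)
  obtain ⟨z, hz, hmin⟩ := e.toContinuousLinearMap.exists_norm_eq_one_forall_mul_norm_le
  have hc : 0 < ‖e z‖ := by simpa using ne_zero_of_norm_ne_zero (hz.trans_ne one_ne_zero)
  refine ⟨z, hz, .of_linearMap (‖e z‖⁻¹ • e.toLinearEquiv.toLinearMap) (fun w => ?_) ?_⟩
  · simpa [norm_smul, le_inv_mul_iff₀ hc] using hmin w
  · simp [norm_smul, hc.ne']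

theorem exists_outerEllipsoidAt : ∃ x : X, ‖x‖ = 1 ∧ OuterEllipsoidAt X x := by
  let e := toEuclidean (E := X)
  obtain ⟨z, hz, hmax⟩ := e.toContinuousLinearMap.exists_norm_eq_one_forall_norm_le_mul
  have hc : 0 < ‖e z‖ := by simpa using ne_zero_of_norm_ne_zero (hz.trans_ne one_ne_zero)
  refine ⟨z, hz, .of_linearMap (‖e z‖⁻¹ • e.toLinearEquiv.toLinearMap)
    ((smul_right_injective _ (inv_ne_zero hc.ne')).comp e.injective) (fun w => ?_) ?_⟩
  · simpa [norm_smul, inv_mul_le_iff₀ hc] using hmax w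
  · simp [norm_smul, hc.ne']

end Ellipsoids

theorem exists_contractive_of_outerEllipsoidAt_of_innerEllipsoidAt {X : Type*}
    [NormedAddCommGroup X] [NormedSpace ℝ X] [FiniteDimensional ℝ X] {x y : X}
    (hx : OuterEllipsoidAt X x) (hy : InnerEllipsoidAt X y) :
    ∃ T : X ≃L[ℝ] X, ‖(T : X →L[ℝ] X)‖ ≤ 1 ∧ T x = y := by
  obtain ⟨L₁, hL₁, hL₁x⟩ := hx.exists_linearEquiv
  obtain ⟨L₂, hL₂, hL₂y⟩ := hy.exists_linearEquiv
  let R := (ℝ ∙ (L₁ x - L₂ y))ᗮ.reflection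
  have hR : R (L₁ x) = L₂ y := Submodule.reflection_sub (hL₁x.trans hL₂y.symm)
  let T := (L₁.trans (R.toLinearEquiv.trans L₂.symm)).toContinuousLinearEquiv
  refine ⟨T, (T : X →L[ℝ] X).opNorm_le_bound zero_le_one fun w => ?_, by simp [T, hR]⟩
  calc ‖T w‖ ≤ ‖L₂ (T w)‖ := hL₂ _
    _ = ‖L₁ w‖ := by simp [T]
    _ ≤ 1 * ‖w‖ := (hL₁ w).trans_eq (one_mul _).symm

/-- A finite-dimensional real normed space is semitransitive iff every point of the unit
sphere admits both an inner and an outer ellipsoid. -/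
theorem stmt7 (X : Type*) [NormedAddCommGroup X] [NormedSpace ℝ X] [FiniteDimensional ℝ X] :
    (∀ x y : X, ‖x‖ = 1 → ‖y‖ = 1 →
        ∃ T : X ≃L[ℝ] X, ‖(T : X →L[ℝ] X)‖ ≤ 1 ∧ T x = y) ↔
      (∀ x : X, ‖x‖ = 1 → InnerEllipsoidAt X x ∧ OuterEllipsoidAt X x) := by
  constructor
  · intro h x hx
    have : Nontrivial X := ⟨⟨x, 0, norm_ne_zero_iff.1 (by simp [hx])⟩⟩
    obtain ⟨z₁, hz₁, hin⟩ := exists_innerEllipsoidAt X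
    obtain ⟨z₀, hz₀, hout⟩ := exists_outerEllipsoidAt X
    obtain ⟨T, hT, rfl⟩ := h x z₀ hx hz₀
    obtain ⟨S, hS, rfl⟩ := h z₁ x hz₁ hx
    exact ⟨hin.map S hS, hout.comap _ T.injective hT⟩
  · intro h x y hx hy
    exact exists_contractive_of_outerEllipsoidAt_of_innerEllipsoidAt (h x hx).2 (h y hy).1
end

section
/- For 1 ≤ p < 2 and n ≥ 2, the unit vector e₁ in ℓ_p^n does not admit an inner ellipsoid: there is no inner-product norm |·| on ℝⁿ with |z| ≥ ‖z‖_p for all z and |e₁| = 1. -/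
/-!
On the line `e₁ + s • e₂` the `ℓ_p` norm satisfies `‖e₁ + s • e₂‖ ^ 2 ≥ ‖e₁ + s • e₂‖ ^ p =
1 + |s| ^ p`, whereas `B (e₁ + s • e₂) (e₁ + s • e₂) = 1 + b s + c s ^ 2`. Averaging over `±s`
removes the linear term and leaves `|s| ^ p ≤ c s ^ 2`, which fails for small `s` because `p < 2`.
-/

open scoped ENNReal
open Filter Topology

theorem LinearMap.BilinForm.apply_add_add_apply_sub {R M : Type*} [CommRing R] [AddCommGroup M]
    [Module R M] (B : LinearMap.BilinForm R M) (x y : M) :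
    B (x + y) (x + y) + B (x - y) (x - y) = 2 * (B x x + B y y) := by
  simp only [map_add, map_sub, LinearMap.add_apply, LinearMap.sub_apply]
  ring

namespace PiLp

theorem single_smul {ι 𝕜 : Type*} [DecidableEq ι] {β : ι → Type*} [Monoid 𝕜]
    [∀ i, AddMonoid (β i)] [∀ i, DistribMulAction 𝕜 (β i)] (p : ℝ≥0∞) (i : ι) (r : 𝕜)
    (x : β i) : single p i (r • x) = r • single p i x := by
  rw [← toLp_single, Pi.single_smul, WithLp.toLp_smul, toLp_single]

theorem norm_single_add_single_rpow {ι : Type*} [Fintype ι] [DecidableEq ι]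
    {β : ι → Type*} [∀ i, SeminormedAddCommGroup (β i)] {p : ℝ≥0∞} (hp : 0 < p.toReal)
    {i j : ι} (hij : i ≠ j) (a : β i) (b : β j) :
    ‖single p i a + single p j b‖ ^ p.toReal = ‖a‖ ^ p.toReal + ‖b‖ ^ p.toReal := by
  rw [norm_eq_sum hp, ← Real.rpow_mul (by positivity), one_div_mul_cancel hp.ne', Real.rpow_one,
    Finset.sum_eq_add i j hij]
  · simp [hij, hij.symm]
  · intro k _ hk
    simp [hk.1.symm, hk.2.symm, Real.zero_rpow hp.ne']
  all_goals simp

end PiLp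

theorem Real.rpow_le_sq_of_one_le_rpow {x q : ℝ} (hx : 0 ≤ x) (hq : 0 < q) (hq2 : q ≤ 2)
    (h : 1 ≤ x ^ q) : x ^ q ≤ x ^ 2 := by
  have hx1 : 1 ≤ x := not_lt.mp fun hx1 => (Real.rpow_lt_one hx hx1 hq).not_ge h
  simpa using Real.rpow_le_rpow_of_exponent_le hx1 hq2

theorem PiLp.one_add_abs_rpow_le_norm_single_add_smul_single_sq {ι : Type*} [Fintype ι]
    [DecidableEq ι] {p : ℝ≥0∞} [Fact (1 ≤ p)] (hp : p ≤ 2) {i j : ι} (hij : i ≠ j)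
    (s : ℝ) :
    1 + |s| ^ p.toReal ≤
      ‖(single p i 1 + s • single p j 1 : PiLp p (fun _ : ι => ℝ))‖ ^ 2 := by
  have hp0 : 0 < p.toReal :=
    ENNReal.toReal_pos (zero_lt_one.trans_le Fact.out).ne' (ne_top_of_le_ne_top (by simp) hp)
  have hp2 : p.toReal ≤ 2 := by simpa using ENNReal.toReal_mono (by simp) hp
  have hnorm : ‖(single p i 1 + s • single p j 1 : PiLp p (fun _ : ι => ℝ))‖ ^ p.toReal =
      1 + |s| ^ p.toReal := by
    rw [← single_smul, smul_eq_mul, mul_one, norm_single_add_single_rpow hp0 hij,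
      Real.norm_eq_abs, Real.norm_eq_abs, abs_one, Real.one_rpow]
  rw [← hnorm]
  refine Real.rpow_le_sq_of_one_le_rpow (norm_nonneg _) hp0 hp2 ?_
  rw [hnorm]
  linarith [Real.rpow_nonneg (abs_nonneg s) p.toReal]

theorem Real.exists_mul_sq_lt_rpow {q : ℝ} (hq : q < 2) (c : ℝ) :
    ∃ t > 0, c * t ^ 2 < t ^ q := by
  have hblow : ∀ᶠ t in 𝓝[>] (0 : ℝ), c < t ^ (q - 2) :=
    (tendsto_rpow_neg_nhdsGT_zero (by linarith)).eventually_gt_atTop c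
  obtain ⟨t, hct, ht⟩ := (hblow.and self_mem_nhdsWithin).exists
  refine ⟨t, ht, ?_⟩
  calc c * t ^ 2 < t ^ (q - 2) * t ^ 2 := by gcongr
    _ = t ^ q := by rw [← Real.rpow_natCast, ← Real.rpow_add ht]; norm_num

/-- For `1 ≤ p < 2` and `n ≥ 2`, the unit vector `e₁` of `ℓ_p^n` admits no inner ellipsoid:
there is no inner-product norm (symmetric positive bilinear form `B`) with
`‖z‖_p ≤ √(B z z)` for all `z` and `B e₁ e₁ = 1`. -/
theorem stmt8 (n : ℕ) (hn : 2 ≤ n) (p : ℝ≥0∞) [Fact (1 ≤ p)] (hp : p < 2) :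
    ¬ ∃ B : LinearMap.BilinForm ℝ (PiLp p (fun _ : Fin n => ℝ)),
        (∀ z w, B z w = B w z) ∧
        (∀ z : PiLp p (fun _ : Fin n => ℝ), ‖z‖ ^ 2 ≤ B z z) ∧
        B ((WithLp.equiv p (Fin n → ℝ)).symm (Pi.single (⟨0, by omega⟩ : Fin n) 1))
          ((WithLp.equiv p (Fin n → ℝ)).symm (Pi.single (⟨0, by omega⟩ : Fin n) 1)) = 1 := by
  rintro ⟨B, -, hle, he₁⟩
  have hp2 : p.toReal < 2 := by simpa using ENNReal.toReal_strict_mono (by simp) hp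
  set e₁ : PiLp p (fun _ : Fin n => ℝ) := PiLp.single p ⟨0, by omega⟩ 1
  set e₂ : PiLp p (fun _ : Fin n => ℝ) := PiLp.single p ⟨1, by omega⟩ 1
  change B e₁ e₁ = 1 at he₁
  have hlow (s : ℝ) : 1 + |s| ^ p.toReal ≤ B (e₁ + s • e₂) (e₁ + s • e₂) :=
    (PiLp.one_add_abs_rpow_le_norm_single_add_smul_single_sq hp.le (by simp) s).trans (hle _)
  obtain ⟨t, ht0, ht⟩ := Real.exists_mul_sq_lt_rpow hp2 (B e₂ e₂)
  have hscale : B (t • e₂) (t • e₂) = t ^ 2 * B e₂ e₂ := by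
    simp only [map_smul, LinearMap.smul_apply, smul_eq_mul]; ring
  have hpar := B.apply_add_add_apply_sub e₁ (t • e₂)
  rw [sub_eq_add_neg, ← neg_smul, he₁, hscale] at hpar
  have hplus := hlow t
  have hminus := hlow (-t)
  rw [abs_neg] at hminus
  rw [abs_of_pos ht0] at hplus hminus
  linarith
end

section
/- Let X be a finite-dimensional real normed space and let y be a flat unit vector, i.e., there is a hyperplane H through the origin such that (y + H) ∩ S is a neighbourhood of y in the unit sphere S. Then for every unit vector x there exists a contractive automorphism T of X with T x = y. -/
/-!
Flatness at `y` says that `φ` is constant on the sphere near `y`, that is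
`φ (y + u) = φ y * ‖y + u‖` for small `u`. Hence `φ y ≠ 0` and `‖y ± w‖ = 1` for small
`w ∈ ker φ`, so the unit ball contains `a • y + w` for `|a| ≤ 1`, a point of the segment
`[w - y, w + y]`.

For a unit vector `x` with norming functional `g`, pick `B` with kernel `ℝ ∙ x`, range in
`ker φ` and small norm. Then `z ↦ g z • y + B z` is injective, hence an automorphism; it sends
`x` to `y`, and a unit vector `u` to `g u • y + B u` with `|g u| ≤ 1`, inside the unit ball.
-/

open Filter Topology Module LinearMap Submodule

section LinearAlgebra

variable {K V : Type*} [Field K] [AddCommGroup V] [Module K V]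

theorem exists_linearMap_range_le_ker_and_ker_eq_span [FiniteDimensional K V]
    {f : Dual K V} (hf : f ≠ 0) {x : V} (hx : x ≠ 0) :
    ∃ B : V →ₗ[K] V, range B ≤ ker f ∧ ker B = K ∙ x := by
  obtain ⟨W, hW⟩ := (K ∙ x).exists_isCompl
  have hrank : finrank K W = finrank K (ker f) := by
    have hWx := Submodule.finrank_add_eq_of_isCompl hW
    have hker := Dual.finrank_ker_add_one_of_ne_zero hf
    rw [finrank_span_singleton hx] at hWx
    omega
  let S := LinearEquiv.ofFinrankEq _ _ hrank
  refine ⟨(ker f).subtype ∘ₗ S.toLinearMap ∘ₗ W.projectionOnto _ hW.symm, ?_, ?_⟩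
  · exact (range_comp_le_range _ _).trans (range_subtype _).le
  · rw [ker_comp_of_ker_eq_bot _ (ker_subtype _), LinearEquiv.ker_comp, ker_projectionOnto]

theorem injective_smulRight_add {g φ : Dual K V} {x y : V} (hgx : g x ≠ 0) (hφy : φ y ≠ 0)
    {B : V →ₗ[K] V} (hBφ : range B ≤ ker φ) (hBx : ker B = K ∙ x) :
    Function.Injective (g.smulRight y + B) := by
  rw [← ker_eq_bot, Submodule.eq_bot_iff]
  intro v hv
  have hv : g v • y + B v = 0 := hv
  have hBv : φ (B v) = 0 := hBφ (mem_range_self B v)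
  have hgv : g v = 0 := by simpa [hBv, hφy] using congr_arg φ hv
  obtain ⟨t, rfl⟩ := mem_span_singleton.mp (hBx ▸ (by simpa [hgv] using hv : v ∈ ker B))
  simp_all

end LinearAlgebra

theorem norm_smul_add_le_one {E : Type*} [SeminormedAddCommGroup E] [NormedSpace ℝ E]
    {y w : E} {a : ℝ} (ha : |a| ≤ 1) (hadd : ‖y + w‖ ≤ 1) (hsub : ‖y - w‖ ≤ 1) :
    ‖a • y + w‖ ≤ 1 := by
  have hmem := convex_closedBall (0 : E) 1
    (mem_closedBall_zero_iff.mpr hadd : y + w ∈ _)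
    (mem_closedBall_zero_iff.mpr (by rwa [← neg_sub, norm_neg]) : w - y ∈ _)
    (by linarith [neg_abs_le a] : 0 ≤ (1 + a) / 2)
    (by linarith [le_abs_self a] : 0 ≤ (1 - a) / 2) (by ring)
  have hcomb : ((1 + a) / 2) • (y + w) + ((1 - a) / 2) • (w - y) = a • y + w := by module
  rwa [hcomb, mem_closedBall_zero_iff] at hmem

section Flat

variable {X : Type*} [NormedAddCommGroup X] [NormedSpace ℝ X] {y : X} {φ : X →ₗ[ℝ] ℝ}

theorem eventually_map_add_eq_mul_norm_of_flat (hy : ‖y‖ = 1)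
    (hflat : {z : X | z - y ∈ ker φ} ∈ 𝓝[Metric.sphere 0 1] y) :
    ∀ᶠ u in 𝓝 (0 : X), φ (y + u) = φ y * ‖y + u‖ := by
  have hy0 : y + 0 ≠ 0 := by simp [← norm_ne_zero_iff, hy]
  have hcont : Continuous fun u : X => y + u := by fun_prop
  have hne : ∀ᶠ u in 𝓝 (0 : X), y + u ≠ 0 := hcont.continuousAt.eventually_ne hy0
  have hnormalize :
      Tendsto (fun u => ‖y + u‖⁻¹ • (y + u)) (𝓝 0) (𝓝[Metric.sphere 0 1] y) := by
    refine tendsto_nhdsWithin_iff.mpr ⟨?_, hne.mono fun u hu => ?_⟩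
    · have : ContinuousAt (fun u : X => ‖y + u‖⁻¹ • (y + u)) 0 :=
        (hcont.norm.continuousAt.inv₀ (norm_ne_zero_iff.mpr hy0)).smul hcont.continuousAt
      simpa [hy] using this.tendsto
    · rw [mem_sphere_zero_iff_norm, norm_smul, norm_inv, norm_norm,
        inv_mul_cancel₀ (norm_ne_zero_iff.mpr hu)]
  filter_upwards [hne, hnormalize hflat] with u hu hmem
  change ‖y + u‖⁻¹ • (y + u) - y ∈ ker φ at hmem
  rw [LinearMap.mem_ker, map_sub, map_smul, smul_eq_mul, sub_eq_zero] at hmem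
  field_simp at hmem
  linarith

theorem map_ne_zero_of_flat (hy : ‖y‖ = 1) (hφ : φ ≠ 0)
    (hflat : {z : X | z - y ∈ ker φ} ∈ 𝓝[Metric.sphere 0 1] y) : φ y ≠ 0 := by
  intro hφy
  refine hφ (LinearMap.ext fun v => ?_)
  have hlim : Tendsto (fun t : ℝ => t • v) (𝓝[≠] 0) (𝓝 0) := by
    simpa using (tendsto_id.smul_const v).mono_left (nhdsWithin_le_nhds (a := (0 : ℝ)))
  obtain ⟨t, ht, ht0⟩ :=
    ((hlim.eventually (eventually_map_add_eq_mul_norm_of_flat hy hflat)).and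
      self_mem_nhdsWithin).exists
  exact (by simpa [hφy] using ht : t = 0 ∨ φ v = 0).resolve_left ht0

theorem exists_norm_add_eq_one_of_flat (hy : ‖y‖ = 1) (hφy : φ y ≠ 0)
    (hflat : {z : X | z - y ∈ ker φ} ∈ 𝓝[Metric.sphere 0 1] y) :
    ∃ ε > 0, ∀ w, φ w = 0 → ‖w‖ ≤ ε → ‖y + w‖ = 1 := by
  obtain ⟨ε, hε, h⟩ :=
    Metric.eventually_nhds_iff.mp (eventually_map_add_eq_mul_norm_of_flat hy hflat)
  refine ⟨ε / 2, by positivity, fun w hw hwε => ?_⟩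
  have hw' := h (show dist w 0 < ε by rw [dist_zero_right]; linarith)
  rwa [map_add, hw, add_zero, eq_comm, mul_eq_left₀ hφy] at hw'

theorem norm_smul_add_le_one_of_flat {ε : ℝ}
    (hflat : ∀ w, φ w = 0 → ‖w‖ ≤ ε → ‖y + w‖ = 1) {a : ℝ} (ha : |a| ≤ 1) {w : X}
    (hw : φ w = 0) (hwε : ‖w‖ ≤ ε) : ‖a • y + w‖ ≤ 1 := by
  refine norm_smul_add_le_one ha (hflat w hw hwε).le ?_
  simpa [sub_eq_add_neg] using (hflat (-w) (by simp [hw]) (by simpa using hwε)).le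

theorem exists_linearMap_range_le_ker_and_ker_eq_span_and_norm_le
    [FiniteDimensional ℝ X] (hφ : φ ≠ 0) {x : X} (hx : x ≠ 0) {ε : ℝ} (hε : 0 < ε) :
    ∃ B : X →ₗ[ℝ] X, range B ≤ ker φ ∧ ker B = ℝ ∙ x ∧ ∀ v, ‖B v‖ ≤ ε * ‖v‖ := by
  obtain ⟨B, hBφ, hBx⟩ := exists_linearMap_range_le_ker_and_ker_eq_span hφ hx
  set C := ‖LinearMap.toContinuousLinearMap B‖
  have hc : 0 < ε / (C + 1) := by positivity
  refine ⟨(ε / (C + 1)) • B, by rwa [range_smul _ _ hc.ne'], by rwa [ker_smul _ _ hc.ne'],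
    fun v => ?_⟩
  have hCε : ε / (C + 1) * C ≤ ε := by
    rw [div_mul_eq_mul_div, div_le_iff₀ (by positivity)]
    nlinarith
  calc ‖(ε / (C + 1)) • B v‖ = ε / (C + 1) * ‖B v‖ := by
        rw [norm_smul, Real.norm_of_nonneg hc.le]
    _ ≤ ε / (C + 1) * (C * ‖v‖) := by
        gcongr
        exact (LinearMap.toContinuousLinearMap B).le_opNorm v
    _ ≤ ε * ‖v‖ := by
        rw [← mul_assoc]
        gcongr

end Flat

/-- If `y` is a flat unit vector (there is a linear hyperplane `H = ker φ` such that
`(y + H) ∩ S` is a relative neighbourhood of `y` in the unit sphere `S`), then every unit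
vector can be sent to `y` by a contractive automorphism. -/
theorem stmt10 (X : Type*) [NormedAddCommGroup X] [NormedSpace ℝ X] [FiniteDimensional ℝ X]
    (y : X) (hy : ‖y‖ = 1) (φ : X →ₗ[ℝ] ℝ) (hφ : φ ≠ 0)
    (hflat : {z : X | z - y ∈ LinearMap.ker φ} ∈ nhdsWithin y (Metric.sphere (0 : X) 1)) :
    ∀ x : X, ‖x‖ = 1 → ∃ T : X ≃L[ℝ] X, ‖(T : X →L[ℝ] X)‖ ≤ 1 ∧ T x = y := by
  have hφy := map_ne_zero_of_flat hy hφ hflat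
  obtain ⟨ε, hε, hunit⟩ := exists_norm_add_eq_one_of_flat hy hφy hflat
  intro x hx
  have hx0 : x ≠ 0 := ne_zero_of_norm_ne_zero (by simp [hx])
  obtain ⟨g, hg, hgx⟩ := exists_dual_vector ℝ x (by simp [hx])
  rw [hx] at hgx
  obtain ⟨B, hBφ, hBx, hBε⟩ :=
    exists_linearMap_range_le_ker_and_ker_eq_span_and_norm_le hφ hx0 hε
  have hinj := injective_smulRight_add (g := (g : X →ₗ[ℝ] ℝ)) (by simp [hgx]) hφy hBφ hBx
  refine ⟨(LinearEquiv.ofInjectiveEndo _ hinj).toContinuousLinearEquiv,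
    ContinuousLinearMap.opNorm_le_of_unit_norm zero_le_one fun u hu => ?_, ?_⟩
  · have hgu : |g u| ≤ 1 := by simpa [hg, hu] using g.le_opNorm u
    exact norm_smul_add_le_one_of_flat hunit hgu (hBφ (mem_range_self B u))
      (by simpa [hu] using hBε u)
  · have hBx0 : B x = 0 := by
      rw [← LinearMap.mem_ker, hBx]
      exact mem_span_singleton_self x
    show g x • y + B x = y
    simp [hgx, hBx0]
end

section
/- Let E ⊆ ℝ² be a solid ellipse centered at the origin with semi-axes a ≤ b, and let x be a boundary point of E. Then E contains a closed Euclidean disc D of radius a²/b with x ∈ ∂D (the disc centered at x + (a²/b)·n where n is the inward unit normal to ∂E at x). -/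
open scoped RealInnerProductSpace

/-!
Write a point of the disc as `v = x + y` and put `r = a²/b`. Then `B v v = 1 + 2⟪g, y⟫ + B y y`,
while membership in the disc reads `‖y‖² ≤ -2 (r / ‖g‖) ⟪g, y⟫`. Hence `B v v ≤ 1` as soon as
`B y y ≤ a⁻² ‖y‖²` and `r a⁻² = 1/b ≤ ‖g‖`. The first is the bound by the largest eigenvalue;
the second follows from `1 = ⟪g, x⟫ ≤ ‖g‖ ‖x‖` and `‖x‖ ≤ b`, which is the bound
`B x x ≥ b⁻² ‖x‖²` by the smallest eigenvalue.
-/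

variable {E : Type*} [NormedAddCommGroup E] [InnerProductSpace ℝ E]

namespace OrthonormalBasis

variable {ι : Type*} [Fintype ι] (e : OrthonormalBasis ι ℝ E) {B : LinearMap.BilinForm ℝ E}

theorem bilinForm_apply_self_eq_sum (hdiag : ∀ i j, i ≠ j → B (e i) (e j) = 0) (y : E) :
    B y y = ∑ i, B (e i) (e i) * ⟪e i, y⟫ ^ 2 := by
  classical
  conv_lhs => rw [← e.sum_repr' y]
  simp only [map_sum, LinearMap.sum_apply, map_smul, LinearMap.smul_apply, smul_eq_mul]
  refine Finset.sum_congr rfl fun i _ => ?_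
  rw [Finset.sum_eq_single i (fun j _ hji => by rw [hdiag j i hji]; ring) (by simp)]
  ring

theorem bilinForm_apply_self_le {M : ℝ} (hdiag : ∀ i j, i ≠ j → B (e i) (e j) = 0)
    (hM : ∀ i, B (e i) (e i) ≤ M) (y : E) : B y y ≤ M * ‖y‖ ^ 2 := by
  rw [e.bilinForm_apply_self_eq_sum hdiag, ← e.sum_sq_inner_right, Finset.mul_sum]
  gcongr with i
  exact hM i

theorem le_bilinForm_apply_self {m : ℝ} (hdiag : ∀ i j, i ≠ j → B (e i) (e j) = 0)
    (hm : ∀ i, m ≤ B (e i) (e i)) (y : E) : m * ‖y‖ ^ 2 ≤ B y y := by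
  rw [e.bilinForm_apply_self_eq_sum hdiag, ← e.sum_sq_inner_right, Finset.mul_sum]
  gcongr with i
  exact hm i

end OrthonormalBasis

theorem orthonormal_pair {u w : E} (huu : ⟪u, u⟫ = 1) (hww : ⟪w, w⟫ = 1) (huw : ⟪u, w⟫ = 0) :
    Orthonormal ℝ ![u, w] := by
  rw [orthonormal_iff_ite]
  simp only [Fin.forall_fin_two, Matrix.cons_val_zero, Matrix.cons_val_one]
  simp only [huu, hww, real_inner_comm u w, huw]
  simp

theorem inv_le_norm_of_inner_eq_one {g x : E} {b : ℝ} (hgx : ⟪g, x⟫ = 1) (hx : ‖x‖ ≤ b) :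
    b⁻¹ ≤ ‖g‖ := by
  have hb : 0 < b := by
    by_contra! hb
    have : x = 0 := norm_le_zero_iff.mp (hx.trans hb)
    simp [this] at hgx
  rw [inv_le_iff_one_le_mul₀' hb]
  calc (1 : ℝ) = ⟪g, x⟫ := hgx.symm
    _ ≤ ‖g‖ * ‖x‖ := real_inner_le_norm g x
    _ ≤ ‖g‖ * b := by gcongr
    _ = b * ‖g‖ := mul_comm _ _

theorem mem_sphere_sub_smul_inv_norm_smul {g : E} (hg : g ≠ 0) (x : E) {r : ℝ} (hr : 0 ≤ r) :
    x ∈ Metric.sphere (x - (r * ‖g‖⁻¹) • g) r := by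
  rw [mem_sphere_iff_norm, sub_sub_cancel, norm_smul, Real.norm_of_nonneg (by positivity),
    mul_assoc, inv_mul_cancel₀ (norm_ne_zero_iff.mpr hg), mul_one]

theorem closedBall_subset_bilinForm_le_one {B : LinearMap.BilinForm ℝ E}
    (hsymm : ∀ z w, B z w = B w z) {M r : ℝ} (hr : 0 < r) (hM : ∀ y, B y y ≤ M * ‖y‖ ^ 2)
    {x g : E} (hx : B x x = 1) (hg : ∀ z, ⟪g, z⟫ = B x z) (hrM : r * M ≤ ‖g‖) :
    Metric.closedBall (x - (r * ‖g‖⁻¹) • g) r ⊆ {v | B v v ≤ 1} := by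
  have hN : 0 < ‖g‖ := norm_pos_iff.mpr fun h => by simp [← hg x, h] at hx
  set t := r * ‖g‖⁻¹
  have ht : t * ‖g‖ = r := by simp only [t, mul_assoc, inv_mul_cancel₀ hN.ne', mul_one]
  intro v hv
  obtain ⟨y, rfl⟩ : ∃ y, v = x + y := ⟨v - x, by abel⟩
  have hball : ‖y‖ ^ 2 + 2 * t * ⟪g, y⟫ ≤ 0 := by
    rw [Metric.mem_closedBall, dist_eq_norm, show x + y - (x - t • g) = y + t • g by abel] at hv
    have hv2 := pow_le_pow_left₀ (norm_nonneg _) hv 2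
    rw [norm_add_sq_real, norm_smul, Real.norm_of_nonneg (by positivity), ht,
      real_inner_smul_right, real_inner_comm] at hv2
    linarith
  have hexpand : B (x + y) (x + y) = 1 + 2 * ⟪g, y⟫ + B y y := by
    simp only [map_add, LinearMap.add_apply, hx, hg, hsymm y x]; ring
  have key : r * (2 * ⟪g, y⟫ + M * ‖y‖ ^ 2) ≤ 0 := calc
    _ = 2 * r * ⟪g, y⟫ + r * M * ‖y‖ ^ 2 := by ring
    _ ≤ 2 * r * ⟪g, y⟫ + ‖g‖ * ‖y‖ ^ 2 := by gcongr
    _ = ‖g‖ * (‖y‖ ^ 2 + 2 * t * ⟪g, y⟫) := by rw [← ht]; ring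
    _ ≤ 0 := mul_nonpos_of_nonneg_of_nonpos hN.le hball
  show B (x + y) (x + y) ≤ 1
  linarith [hM y, nonpos_of_mul_nonpos_right key hr]

/-- Let `E = {v | B v v ≤ 1}` be a solid ellipse in `ℝ²` centered at the origin, with
semi-axes `a ≤ b`: in an orthonormal basis `u, w` the form `B` diagonalizes with
`B u u = 1/a²`, `B w w = 1/b²`. If `x ∈ ∂E` and `g` represents the linear form `B x ·`
(so `-g/‖g‖` is the inward unit normal at `x`), then the closed disc of radius `a²/b`
centered at `x - (a²/b)·g/‖g‖` passes through `x` and is contained in `E`. -/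
theorem stmt11 (B : LinearMap.BilinForm ℝ (EuclideanSpace ℝ (Fin 2)))
    (hsymm : ∀ z w, B z w = B w z)
    (a b : ℝ) (ha : 0 < a) (hab : a ≤ b)
    (u w : EuclideanSpace ℝ (Fin 2))
    (huu : ⟪u, u⟫ = 1) (hww : ⟪w, w⟫ = 1) (huw : ⟪u, w⟫ = 0)
    (hBu : B u u = (a ^ 2)⁻¹) (hBw : B w w = (b ^ 2)⁻¹) (hBuw : B u w = 0)
    (x : EuclideanSpace ℝ (Fin 2)) (hx : B x x = 1)
    (g : EuclideanSpace ℝ (Fin 2)) (hg : ∀ z, ⟪g, z⟫ = B x z) :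
    x ∈ Metric.sphere (x - ((a ^ 2 / b) * ‖g‖⁻¹) • g) (a ^ 2 / b) ∧
    Metric.closedBall (x - ((a ^ 2 / b) * ‖g‖⁻¹) • g) (a ^ 2 / b) ⊆
      {v : EuclideanSpace ℝ (Fin 2) | B v v ≤ 1} := by
  have hb : 0 < b := ha.trans_le hab
  have hON := orthonormal_pair huu hww huw
  let e := OrthonormalBasis.mk hON
    (hON.linearIndependent.span_eq_top_of_card_eq_finrank (by simp)).ge
  have he : ⇑e = ![u, w] := OrthonormalBasis.coe_mk _ _
  have hdiag : ∀ i j, i ≠ j → B (e i) (e j) = 0 := by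
    simp [he, Fin.forall_fin_two, hBuw, hsymm w u]
  have hba : (b ^ 2)⁻¹ ≤ (a ^ 2)⁻¹ := by gcongr
  have hle : ∀ i, B (e i) (e i) ≤ (a ^ 2)⁻¹ := by simp [he, Fin.forall_fin_two, hBu, hBw, hba]
  have hge : ∀ i, (b ^ 2)⁻¹ ≤ B (e i) (e i) := by simp [he, Fin.forall_fin_two, hBu, hBw, hba]
  have hxb : ‖x‖ ≤ b := by
    have := e.le_bilinForm_apply_self hdiag hge x
    rw [hx, inv_mul_le_iff₀ (by positivity), mul_one] at this
    exact (pow_le_pow_iff_left₀ (norm_nonneg x) hb.le two_ne_zero).mp this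
  have hg0 : g ≠ 0 := fun h => by simp [← hg x, h] at hx
  refine ⟨mem_sphere_sub_smul_inv_norm_smul hg0 x (by positivity),
    closedBall_subset_bilinForm_le_one hsymm (by positivity)
      (e.bilinForm_apply_self_le hdiag hle) hx hg ?_⟩
  calc a ^ 2 / b * (a ^ 2)⁻¹ = b⁻¹ := by field_simp
    _ ≤ ‖g‖ := inv_le_norm_of_inner_eq_one (by rw [hg, hx]) hxb
end

section
/- For every h ≥ 0 and 0 < r < 1, setting D = the closed Euclidean disc of radius r centered at (1−r, h) and p = (1, h), there exists a solid ellipse E centered at the origin with p ∈ ∂E and E contained in the convex hull of (−D) ∪ D. -/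
/-!
Take the ellipse `x² + ((y - hx)/r)² ≤ 1`, which passes through `(1, h)`. With `c = (1 - r, h)`,
each of its points `v = (x, y)` splits as `v = x • c + w`, where `w = (rx, y - hx)` has `‖w‖ ≤ r`
and `|x| ≤ 1`. Then `c + w ∈ D` and `-c + w ∈ -D`, and `v` lies on the segment between them.
-/

open Metric

theorem smul_add_mem_convexHull_neg_union_closedBall {E : Type*} [SeminormedAddCommGroup E]
    [NormedSpace ℝ E] (c w : E) {r t : ℝ} (hw : ‖w‖ ≤ r) (ht : |t| ≤ 1) :
    t • c + w ∈ convexHull ℝ (-closedBall c r ∪ closedBall c r) := by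
  obtain ⟨ht₁, ht₂⟩ := abs_le.mp ht
  have hneg : -c + w ∈ -closedBall c r := by
    rw [Set.mem_neg, mem_closedBall, dist_eq_norm]
    simpa [norm_neg] using hw
  have hpos : c + w ∈ closedBall c r := by
    rwa [mem_closedBall, dist_eq_norm, add_sub_cancel_left]
  have hseg : t • c + w ∈ segment ℝ (-c + w) (c + w) :=
    ⟨(1 - t) / 2, (1 + t) / 2, by linarith, by linarith, by ring, by module⟩
  exact segment_subset_convexHull (Set.mem_union_left _ hneg) (Set.mem_union_right _ hpos) hseg

theorem sq_add_sq_sub_mul_div_pos {v : EuclideanSpace ℝ (Fin 2)} (hv : v ≠ 0) (h : ℝ) {r : ℝ}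
    (hr : r ≠ 0) : 0 < v 0 ^ 2 + ((v 1 - h * v 0) / r) ^ 2 := by
  by_contra! hle
  have hzero := le_antisymm hle (by positivity)
  rw [add_eq_zero_iff_of_nonneg (sq_nonneg _) (sq_nonneg _), sq_eq_zero_iff, sq_eq_zero_iff,
    div_eq_zero_iff, or_iff_left hr, mul_comm h] at hzero
  obtain ⟨hx, hy⟩ := hzero
  exact hv (by ext i; fin_cases i <;> simp_all)

theorem stmt12_general (h r : ℝ) (hr0 : 0 < r) :
    ∃ A B C : ℝ,
      (∀ v : EuclideanSpace ℝ (Fin 2), v ≠ 0 →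
        0 < A * v 0 ^ 2 + B * v 1 ^ 2 + C * (v 0 * v 1)) ∧
      A * 1 ^ 2 + B * h ^ 2 + C * (1 * h) = 1 ∧
      {v : EuclideanSpace ℝ (Fin 2) | A * v 0 ^ 2 + B * v 1 ^ 2 + C * (v 0 * v 1) ≤ 1} ⊆
        convexHull ℝ
          ((-(Metric.closedBall ((WithLp.equiv 2 (Fin 2 → ℝ)).symm ![1 - r, h]) r)) ∪
            Metric.closedBall ((WithLp.equiv 2 (Fin 2 → ℝ)).symm ![1 - r, h]) r) := by
  set c : EuclideanSpace ℝ (Fin 2) := (WithLp.equiv 2 (Fin 2 → ℝ)).symm ![1 - r, h]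
  have hQ (x y : ℝ) : (1 + h ^ 2 / r ^ 2) * x ^ 2 + 1 / r ^ 2 * y ^ 2 + -(2 * h) / r ^ 2 * (x * y)
      = x ^ 2 + ((y - h * x) / r) ^ 2 := by
    field_simp
    ring
  refine ⟨1 + h ^ 2 / r ^ 2, 1 / r ^ 2, -(2 * h) / r ^ 2, fun v hv => ?_, by rw [hQ]; simp,
    fun v hv => ?_⟩
  · simpa only [hQ] using sq_add_sq_sub_mul_div_pos hv h hr0.ne'
  · rw [Set.mem_ofPred_eq, hQ] at hv
    have hw : ‖v - v 0 • c‖ ^ 2 ≤ r ^ 2 := by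
      rw [EuclideanSpace.real_norm_sq_eq, Fin.sum_univ_two]
      simp only [c, PiLp.sub_apply, PiLp.smul_apply, WithLp.equiv_symm_apply,
        Matrix.cons_val_zero, Matrix.cons_val_one, smul_eq_mul]
      calc (v 0 - v 0 * (1 - r)) ^ 2 + (v 1 - v 0 * h) ^ 2
          = r ^ 2 * (v 0 ^ 2 + ((v 1 - h * v 0) / r) ^ 2) := by field_simp; ring
        _ ≤ r ^ 2 := mul_le_of_le_one_right (by positivity) hv
    have ht : v 0 ^ 2 ≤ 1 := by nlinarith [sq_nonneg ((v 1 - h * v 0) / r)]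
    simpa using smul_add_mem_convexHull_neg_union_closedBall c (v - v 0 • c)
      ((pow_le_pow_iff_left₀ (norm_nonneg _) hr0.le two_ne_zero).mp hw)
      ((sq_le_one_iff_abs_le_one _).mp ht)

/-- For `h ≥ 0` and `0 < r < 1`, with `D` the closed disc of radius `r` centered at
`(1-r, h)` and `p = (1, h)`, there is a solid ellipse `{Ax² + By² + Cxy ≤ 1}` centered at
the origin passing through `p` and contained in the convex hull of `(-D) ∪ D`. -/
theorem stmt12 (h r : ℝ) (hh : 0 ≤ h) (hr0 : 0 < r) (hr1 : r < 1) :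
    ∃ A B C : ℝ,
      (∀ v : EuclideanSpace ℝ (Fin 2), v ≠ 0 →
        0 < A * v 0 ^ 2 + B * v 1 ^ 2 + C * (v 0 * v 1)) ∧
      A * 1 ^ 2 + B * h ^ 2 + C * (1 * h) = 1 ∧
      {v : EuclideanSpace ℝ (Fin 2) | A * v 0 ^ 2 + B * v 1 ^ 2 + C * (v 0 * v 1) ≤ 1} ⊆
        convexHull ℝ
          ((-(Metric.closedBall ((WithLp.equiv 2 (Fin 2 → ℝ)).symm ![1 - r, h]) r)) ∪
            Metric.closedBall ((WithLp.equiv 2 (Fin 2 → ℝ)).symm ![1 - r, h]) r) :=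
  stmt12_general h r hr0
end

section
/- Let B be the unit ball of a norm on ℝ² and x a point of its boundary. Then x admits an inner ellipse (an ellipse centered at the origin contained in B with x on its boundary) if and only if there exists a closed Euclidean disc D (not necessarily centered at the origin) with x ∈ ∂D and D ⊆ B. -/
/-!
If `B` is an inner ellipse at `x`, then `B v v ≤ C * ‖v‖ ^ 2` for some `C > 0`, and writing
`v = x + u` gives `B v v ≤ 1 + 2 * B x u + C * ‖u‖ ^ 2`; so the disc through `x` centred at
`x - g`, where `⟪g, ·⟫ = C⁻¹ * B x ·`, lies in the ellipse.

Conversely, if a disc `closedBall c ρ` through `x` lies in the unit ball, then by convexity and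
symmetry so does every `closedBall (s • c) ρ` with `|s| ≤ 1`. For a centre `p = s • c` on the
circle of radius `ρ` about `x`, the linear map `w ↦ ρ • w + ⟪u, w⟫ • p`, `u = ρ⁻¹ • (x - p)`,
sends the Euclidean unit ball into the union of these discs and `u` to `x`; if it is invertible,
the image of the unit ball is an inner ellipse at `x`. Invertibility means `⟪x - p, x⟫ ≠ 0`: it
fails for `p = c` exactly when the line `ℝ • x` is tangent to the disc at `x`, and then the other
point where `ℝ • c` meets the circle works.
-/

open Metric
open LinearMap (BilinForm)
open scoped RealInnerProductSpace

theorem closedBall_smul_subset_of_convex {E : Type*} [SeminormedAddCommGroup E]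
    [NormedSpace ℝ E] {S : Set E} (hS : Convex ℝ S)
    (hneg : ∀ v ∈ S, -v ∈ S) {c : E} {ρ s : ℝ} (hc : closedBall c ρ ⊆ S) (hs : |s| ≤ 1) :
    closedBall (s • c) ρ ⊆ S := by
  intro v hv
  set w := v - s • c
  have hw : ‖w‖ ≤ ρ := by rwa [mem_closedBall, dist_eq_norm] at hv
  have hplus : c + w ∈ S := hc (by simpa [dist_eq_norm] using hw)
  have hminus : -(c - w) ∈ S := hneg _ (hc (by simpa [dist_eq_norm] using hw))
  obtain ⟨hs₁, hs₂⟩ := abs_le.mp hs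
  convert hS hplus hminus (a := (1 + s) / 2) (b := (1 - s) / 2) (by linarith) (by linarith)
    (by ring) using 1
  module

section InnerProductSpace

variable {E : Type*} [NormedAddCommGroup E] [InnerProductSpace ℝ E]

theorem exists_smul_inner_sub_ne_zero {x c : E} {ρ : ℝ} (hρ : 0 < ρ) (hx : x ≠ 0)
    (hxc : ‖x - c‖ = ρ) : ∃ s : ℝ, |s| ≤ 1 ∧ ‖x - s • c‖ = ρ ∧ ⟪x - s • c, x⟫ ≠ 0 := by
  by_cases hc : ⟪x - c, x⟫ = 0
  · have hsq : ‖x - c‖ ^ 2 = ρ ^ 2 := by rw [hxc]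
    rw [norm_sub_sq_real] at hsq
    rw [inner_sub_left, real_inner_self_eq_norm_sq, real_inner_comm] at hc
    have hx2 : 0 < ‖x‖ ^ 2 := by positivity
    have hd : 0 < ‖c‖ ^ 2 := by nlinarith
    obtain ⟨s, hs⟩ : ∃ s : ℝ, (1 - s) * ‖c‖ ^ 2 = 2 * ρ ^ 2 :=
      ⟨1 - 2 * ρ ^ 2 / ‖c‖ ^ 2, by rw [sub_sub_cancel, div_mul_cancel₀ _ hd.ne']⟩
    have hs1 : 0 < 1 - s := by nlinarith
    refine ⟨s, abs_le.mpr ⟨by nlinarith, by linarith⟩, ?_, ?_⟩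
    · rw [← pow_left_inj₀ (norm_nonneg _) hρ.le two_ne_zero, norm_sub_sq_real, norm_smul,
        real_inner_smul_right, mul_pow, Real.norm_eq_abs, sq_abs]
      linear_combination (2 * s - 1) * hsq + (2 - 2 * s) * hc + (1 - s) * hs
    · rw [inner_sub_left, real_inner_smul_left, real_inner_self_eq_norm_sq, real_inner_comm,
        show ‖x‖ ^ 2 - s * ⟪x, c⟫ = ‖x‖ ^ 2 * (1 - s) by linear_combination s * hc]
      positivity
  · exact ⟨1, by norm_num, by rwa [one_smul], by rwa [one_smul]⟩

theorem exists_bilinForm_of_injective {F : Type*} [NormedAddCommGroup F] [InnerProductSpace ℝ F]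
    {S : Set E} {x : E} (M : E →ₗ[ℝ] F) (hM : Function.Injective M)
    (hMS : ∀ v, ‖M v‖ ≤ 1 → v ∈ S) (hMx : ‖M x‖ = 1) :
    ∃ B : BilinForm ℝ E, (∀ z w, B z w = B w z) ∧ (∀ z, z ≠ 0 → 0 < B z z) ∧
      {v | B v v ≤ 1} ⊆ S ∧ B x x = 1 := by
  refine ⟨(innerₗ F).compl₁₂ M M, fun z w => real_inner_comm _ _, fun z hz => ?_,
    fun v hv => hMS v ?_, ?_⟩
  · simpa using real_inner_self_pos.mpr ((map_ne_zero_iff M hM).mpr hz)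
  · simpa [real_inner_self_eq_norm_sq, sq_le_one_iff_abs_le_one] using hv
  · simp [hMx]

theorem exists_bilinForm_of_closedBall_smul_subset {S : Set E} {x p : E} {r : ℝ} (hr : 0 < r)
    (hxp : ‖x - p‖ = r) (hdet : ⟪x - p, x⟫ ≠ 0)
    (hS : ∀ s : ℝ, |s| ≤ 1 → closedBall (s • p) r ⊆ S) :
    ∃ B : BilinForm ℝ E, (∀ z w, B z w = B w z) ∧ (∀ z, z ≠ 0 → 0 < B z z) ∧
      {v | B v v ≤ 1} ⊆ S ∧ B x x = 1 := by
  set u := r⁻¹ • (x - p) with hu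
  have hu1 : ‖u‖ = 1 := by rw [hu, norm_smul, hxp, norm_inv, Real.norm_of_nonneg hr.le,
    inv_mul_cancel₀ hr.ne']
  have hxu : x = p + r • u := by rw [hu, smul_inv_smul₀ hr.ne']; abel
  set q := r + ⟪u, p⟫ with hq
  have hux : ⟪u, x⟫ = q := by
    rw [hxu, inner_add_right, real_inner_smul_right, real_inner_self_eq_norm_sq, hu1]; ring
  have hq0 : q ≠ 0 := by
    rw [← hux, hu, real_inner_smul_left]
    exact mul_ne_zero (inv_ne_zero hr.ne') hdet
  -- `M` is the inverse of `w ↦ r • w + ⟪u, w⟫ • p`, invertible since `r * q = ⟪x - p, x⟫ ≠ 0`.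
  let M : E →ₗ[ℝ] E := r⁻¹ • (LinearMap.id - q⁻¹ • (innerₗ E u).smulRight p)
  have hM : ∀ v, M v = r⁻¹ • (v - (q⁻¹ * ⟪u, v⟫) • p) := fun v => by
    simp [M, mul_smul]
  have hinv : ∀ v, v = r • M v + ⟪u, M v⟫ • p := fun v => by
    have hcoef : r⁻¹ * (⟪u, v⟫ - q⁻¹ * ⟪u, v⟫ * ⟪u, p⟫) = q⁻¹ * ⟪u, v⟫ := by
      field_simp
      linear_combination ⟪u, v⟫ * hq
    rw [hM, smul_inv_smul₀ hr.ne', real_inner_smul_right, inner_sub_right,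
      real_inner_smul_right, hcoef, sub_add_cancel]
  refine exists_bilinForm_of_injective M (fun v w h => by rw [hinv v, h, ← hinv w])
    (fun v hv => ?_) ?_
  · apply hS ⟪u, M v⟫ ((abs_real_inner_le_norm u (M v)).trans (by rw [hu1, one_mul]; exact hv))
    rw [mem_closedBall, dist_eq_norm, sub_eq_of_eq_add (hinv v), norm_smul,
      Real.norm_of_nonneg hr.le]
    exact mul_le_of_le_one_right hr.le hv
  · rw [hM, hux, inv_mul_cancel₀ hq0, one_smul, ← hu, hu1]

theorem exists_bilinForm_of_closedBall_subset {S : Set E} (hS : Convex ℝ S)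
    (hneg : ∀ v ∈ S, -v ∈ S) {x c : E} {ρ : ℝ} (hx : x ≠ 0) (hρ : 0 < ρ) (hxc : dist x c = ρ)
    (hc : closedBall c ρ ⊆ S) :
    ∃ B : BilinForm ℝ E, (∀ z w, B z w = B w z) ∧ (∀ z, z ≠ 0 → 0 < B z z) ∧
      {v | B v v ≤ 1} ⊆ S ∧ B x x = 1 := by
  obtain ⟨s, hs, hxs, hdet⟩ := exists_smul_inner_sub_ne_zero hρ hx (by rwa [← dist_eq_norm])
  refine exists_bilinForm_of_closedBall_smul_subset hρ hxs hdet fun t ht => ?_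
  rw [smul_smul]
  exact closedBall_smul_subset_of_convex hS hneg hc
    (by rw [abs_mul]; exact mul_le_one₀ ht (abs_nonneg s) hs)

variable [FiniteDimensional ℝ E]

theorem LinearMap.BilinForm.exists_le_mul_norm_sq (B : BilinForm ℝ E) :
    ∃ C > 0, ∀ u, B u u ≤ C * ‖u‖ ^ 2 := by
  let B' : E →L[ℝ] E →L[ℝ] ℝ := LinearMap.toContinuousLinearMap
    ((LinearMap.toContinuousLinearMap : (E →ₗ[ℝ] ℝ) ≃ₗ[ℝ] _).toLinearMap ∘ₗ B)
  refine ⟨‖B'‖ + 1, by positivity, fun u => ?_⟩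
  calc B u u ≤ ‖B' u u‖ := le_abs_self _
    _ ≤ ‖B'‖ * ‖u‖ * ‖u‖ := B'.le_opNorm₂ u u
    _ ≤ (‖B'‖ + 1) * ‖u‖ ^ 2 := by nlinarith [norm_nonneg B', sq_nonneg ‖u‖]

theorem exists_closedBall_subset_of_bilinForm (B : BilinForm ℝ E) (hB : ∀ z w, B z w = B w z)
    {x : E} (hx : B x x = 1) :
    ∃ (c : E) (ρ : ℝ), 0 < ρ ∧ dist x c = ρ ∧ closedBall c ρ ⊆ {v | B v v ≤ 1} := by
  obtain ⟨C, hC, hBC⟩ := LinearMap.BilinForm.exists_le_mul_norm_sq B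
  obtain ⟨g, hg⟩ : ∃ g : E, ∀ w, ⟪g, w⟫ = C⁻¹ * B x w :=
    ⟨(InnerProductSpace.toDual ℝ E).symm (C⁻¹ • LinearMap.toContinuousLinearMap (B x)),
      fun w => by simp [real_inner_smul_left]⟩
  have hg0 : g ≠ 0 := by
    rintro rfl
    exact hC.ne (by simpa [hx] using hg x)
  refine ⟨x - g, ‖g‖, norm_pos_iff.mpr hg0, by rw [dist_eq_norm, sub_sub_cancel], fun v hv => ?_⟩
  set u := v - x with hu
  have hball : ‖u + g‖ ^ 2 ≤ ‖g‖ ^ 2 := by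
    rw [mem_closedBall, dist_eq_norm, show v - (x - g) = u + g by rw [hu]; abel] at hv
    gcongr
  rw [norm_add_sq_real, real_inner_comm, hg] at hball
  have hCu : C * ‖u‖ ^ 2 + 2 * B x u ≤ 0 := by
    have h := mul_nonpos_of_nonneg_of_nonpos hC.le (by linarith : ‖u‖ ^ 2 + 2 * (C⁻¹ * B x u) ≤ 0)
    field_simp at h
    linarith
  have hv : v = x + u := by rw [hu]; abel
  show B v v ≤ 1
  calc B v v = B x x + 2 * B x u + B u u := by
        rw [hv, map_add, map_add, LinearMap.add_apply, LinearMap.add_apply, hB u x]; ring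
    _ ≤ 1 + 2 * B x u + C * ‖u‖ ^ 2 := by linarith [hBC u]
    _ ≤ 1 := by linarith

end InnerProductSpace

theorem stmt13_general (N : EuclideanSpace ℝ (Fin 2) → ℝ)
    (hNs : ∀ (c : ℝ) v, N (c • v) = |c| * N v)
    (hNt : ∀ v w, N (v + w) ≤ N v + N w)
    (x : EuclideanSpace ℝ (Fin 2)) (hx : N x = 1) :
    (∃ B : LinearMap.BilinForm ℝ (EuclideanSpace ℝ (Fin 2)),
        (∀ z w, B z w = B w z) ∧ (∀ z, z ≠ 0 → 0 < B z z) ∧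
        {v | B v v ≤ 1} ⊆ {v | N v ≤ 1} ∧ B x x = 1) ↔
      (∃ (c : EuclideanSpace ℝ (Fin 2)) (ρ : ℝ), 0 < ρ ∧ dist x c = ρ ∧
        Metric.closedBall c ρ ⊆ {v | N v ≤ 1}) := by
  let p : Seminorm ℝ (EuclideanSpace ℝ (Fin 2)) := Seminorm.of N hNt hNs
  have hx0 : x ≠ 0 := by
    rintro rfl
    exact one_ne_zero (hx.symm.trans (map_zero p))
  rw [show {v | N v ≤ 1} = p.closedBall 0 1 from p.closedBall_zero_eq.symm]
  constructor
  · rintro ⟨B, hB, -, hBS, hBx⟩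
    obtain ⟨c, ρ, hρ, hxc, hc⟩ := exists_closedBall_subset_of_bilinForm B hB hBx
    exact ⟨c, ρ, hρ, hxc, hc.trans hBS⟩
  · rintro ⟨c, ρ, hρ, hxc, hc⟩
    exact exists_bilinForm_of_closedBall_subset (p.convex_closedBall 0 1)
      (fun v => p.neg_mem_closedBall_zero.mpr) hx0 hρ hxc hc

/-- Let `N` be a norm on `ℝ²` with unit ball `B = {v | N v ≤ 1}` and `x ∈ ∂B` (`N x = 1`).
Then `x` admits an inner ellipse (an origin-centered ellipse contained in `B` with `x` on
its boundary) iff there is a closed Euclidean disc `D ⊆ B` with `x ∈ ∂D`. -/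
theorem stmt13 (N : EuclideanSpace ℝ (Fin 2) → ℝ)
    (hN0 : ∀ v, N v = 0 ↔ v = 0)
    (hNs : ∀ (c : ℝ) v, N (c • v) = |c| * N v)
    (hNt : ∀ v w, N (v + w) ≤ N v + N w)
    (x : EuclideanSpace ℝ (Fin 2)) (hx : N x = 1) :
    (∃ B : LinearMap.BilinForm ℝ (EuclideanSpace ℝ (Fin 2)),
        (∀ z w, B z w = B w z) ∧ (∀ z, z ≠ 0 → 0 < B z z) ∧
        {v | B v v ≤ 1} ⊆ {v | N v ≤ 1} ∧ B x x = 1) ↔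
      (∃ (c : EuclideanSpace ℝ (Fin 2)) (ρ : ℝ), 0 < ρ ∧ dist x c = ρ ∧
        Metric.closedBall c ρ ⊆ {v | N v ≤ 1}) :=
  stmt13_general N hNs hNt x hx
end

section
/- Let X be a normed space with modulus of uniform convexity δ, let x be a unit vector, x* a norm-one functional with ⟨x*, x⟩ = 1, and H = ker x*. If z = t·x + u with u ∈ H and ‖z‖ ≤ 1, then 1 − t ≥ δ(‖u‖). -/
/-- The modulus of uniform convexity of `X`:
`δ(ε) = inf {1 - ‖(a+b)/2‖ : ‖a‖ ≤ 1, ‖b‖ ≤ 1, ‖a-b‖ ≥ ε}`. -/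
noncomputable def uconvMod (X : Type*) [NormedAddCommGroup X] [NormedSpace ℝ X]
    (ε : ℝ) : ℝ :=
  sInf {d : ℝ | ∃ a b : X, ‖a‖ ≤ 1 ∧ ‖b‖ ≤ 1 ∧ ε ≤ ‖a - b‖ ∧
    d = 1 - ‖(1 / 2 : ℝ) • (a + b)‖}

/-- If `x` is a unit vector, `x*` a norm-one functional with `⟨x*, x⟩ = 1`, `u ∈ ker x*`
and `‖t·x + u‖ ≤ 1`, then `1 - t ≥ δ(‖u‖)`. -/
theorem stmt14 (X : Type*) [NormedAddCommGroup X] [NormedSpace ℝ X]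
    (x : X) (hx : ‖x‖ = 1) (φ : X →L[ℝ] ℝ) (hφ : ‖φ‖ = 1) (hφx : φ x = 1)
    (u : X) (hu : φ u = 0) (t : ℝ) (hz : ‖t • x + u‖ ≤ 1) :
    uconvMod X ‖u‖ ≤ 1 - t := by
  have ht : |t| ≤ 1 := by
    have h1 : |φ (t • x + u)| ≤ ‖φ‖ * ‖t • x + u‖ := φ.le_opNorm _
    have h2 : φ (t • x + u) = t := by simp [hu, hφx]
    rw [h2, hφ, one_mul] at h1
    exact h1.trans hz
  have hbdd : BddBelow {d : ℝ | ∃ a b : X, ‖a‖ ≤ 1 ∧ ‖b‖ ≤ 1 ∧ ‖u‖ ≤ ‖a - b‖ ∧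
      d = 1 - ‖(1 / 2 : ℝ) • (a + b)‖} := by
    refine ⟨0, ?_⟩
    rintro d ⟨a, b, ha, hb, _, rfl⟩
    have : ‖(1 / 2 : ℝ) • (a + b)‖ ≤ 1 := by
      rw [norm_smul]
      calc |(1/2 : ℝ)| * ‖a + b‖ ≤ (1/2) * (‖a‖ + ‖b‖) := by
            rw [abs_of_pos (by norm_num : (0:ℝ) < 1/2)]
            exact mul_le_mul_of_nonneg_left (norm_add_le a b) (by norm_num)
        _ ≤ 1 := by nlinarith
    linarith
  have hmem : (1 - ‖(1 / 2 : ℝ) • ((t • x + u) + t • x)‖) ∈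
      {d : ℝ | ∃ a b : X, ‖a‖ ≤ 1 ∧ ‖b‖ ≤ 1 ∧ ‖u‖ ≤ ‖a - b‖ ∧
        d = 1 - ‖(1 / 2 : ℝ) • (a + b)‖} := by
    refine ⟨t • x + u, t • x, hz, ?_, ?_, rfl⟩
    · rw [norm_smul, hx, mul_one]; exact ht
    · have : (t • x + u) - t • x = u := by abel
      rw [this]
  have hle : uconvMod X ‖u‖ ≤ 1 - ‖(1 / 2 : ℝ) • ((t • x + u) + t • x)‖ :=
    csInf_le hbdd hmem
  have hm : t ≤ ‖(1 / 2 : ℝ) • ((t • x + u) + t • x)‖ := by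
    have h2 : φ ((1 / 2 : ℝ) • ((t • x + u) + t • x)) = t := by
      simp [hu, hφx]; ring
    have h1 : |φ ((1 / 2 : ℝ) • ((t • x + u) + t • x))| ≤
        ‖φ‖ * ‖(1 / 2 : ℝ) • ((t • x + u) + t • x)‖ := φ.le_opNorm _
    rw [h2, hφ, one_mul] at h1
    exact (le_abs_self t).trans h1
  linarith
end

section
/- Let X be a finite-dimensional real normed space whose modulus of uniform convexity satisfies δ_X(ε) ≥ c²ε² for some c > 0 and all ε ∈ (0,2]. Then there is a constant α > 0 such that every unit vector x admits an outer ellipsoid F with F ⊆ α·B, where B is the unit ball of X. -/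
open LinearMap (BilinForm)
open scoped RealInnerProductSpace

section UniformConvexity

variable {X : Type*} [NormedAddCommGroup X] [NormedSpace ℝ X]

lemma norm_half_smul_add_le_one {a b : X} (ha : ‖a‖ ≤ 1) (hb : ‖b‖ ≤ 1) :
    ‖(1 / 2 : ℝ) • (a + b)‖ ≤ 1 := by
  rw [norm_smul, Real.norm_of_nonneg (by norm_num)]
  linarith [norm_add_le a b]

lemma uconvMod_le {a b : X} (ha : ‖a‖ ≤ 1) (hb : ‖b‖ ≤ 1) :
    uconvMod X ‖a - b‖ ≤ 1 - ‖(1 / 2 : ℝ) • (a + b)‖ := by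
  refine csInf_le ⟨0, ?_⟩ ⟨a, b, ha, hb, le_rfl, rfl⟩
  rintro d ⟨a', b', ha', hb', -, rfl⟩
  linarith [norm_half_smul_add_le_one ha' hb']

lemma sq_mul_sq_norm_sub_le_of_uconvMod {c : ℝ}
    (hδ : ∀ ε ∈ Set.Ioc (0 : ℝ) 2, c ^ 2 * ε ^ 2 ≤ uconvMod X ε)
    {a b : X} (ha : ‖a‖ ≤ 1) (hb : ‖b‖ ≤ 1) :
    c ^ 2 * ‖a - b‖ ^ 2 ≤ 1 - ‖(1 / 2 : ℝ) • (a + b)‖ := by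
  rcases eq_or_ne a b with rfl | hab
  · simpa using norm_half_smul_add_le_one ha ha
  · have hpos : 0 < ‖a - b‖ := norm_pos_iff.2 (sub_ne_zero.2 hab)
    have hle : ‖a - b‖ ≤ 2 := by linarith [norm_sub_le a b]
    exact (hδ _ ⟨hpos, hle⟩).trans (uconvMod_le ha hb)

end UniformConvexity

section NormingFunctional

variable {X : Type*} [NormedAddCommGroup X] [NormedSpace ℝ X] {c : ℝ} {x : X}
  {g : StrongDual ℝ X}

lemma mul_norm_sub_smul_sq_le_of_norm_eq_one
    (hconv : ∀ a b : X, ‖a‖ ≤ 1 → ‖b‖ ≤ 1 →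
      c ^ 2 * ‖a - b‖ ^ 2 ≤ 1 - ‖(1 / 2 : ℝ) • (a + b)‖)
    (hx : ‖x‖ = 1) (hg : ‖g‖ ≤ 1) (hgx : g x = 1) {u : X} (hu : ‖u‖ = 1) (hgu : 0 ≤ g u) :
    c ^ 2 / (1 + 2 * c ^ 2) * ‖u - g u • x‖ ^ 2 ≤ 1 - g u ^ 2 := by
  have hg_le : ∀ z, g z ≤ ‖z‖ := fun z => by
    simpa using (le_abs_self _).trans (g.le_of_opNorm_le hg z)
  set d := 1 - g u with hd
  set r := ‖x - u‖
  have hd0 : 0 ≤ d := by linarith [hg_le u]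
  have hd1 : d ≤ 1 := by linarith
  have hmid : c ^ 2 * r ^ 2 ≤ d / 2 := by
    have hgmid := hg_le ((1 / 2 : ℝ) • (x + u))
    rw [map_smul, map_add, hgx, smul_eq_mul] at hgmid
    linarith [hconv x u hx.le hu.le]
  have hq : ‖u - g u • x‖ ≤ r + d := calc
    ‖u - g u • x‖ = ‖(u - x) + d • x‖ := by rw [hd]; congr 1; module
    _ ≤ ‖u - x‖ + ‖d • x‖ := norm_add_le _ _
    _ = r + d := by rw [norm_sub_rev, norm_smul, hx, Real.norm_of_nonneg hd0, mul_one]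
  rw [div_mul_eq_mul_div, div_le_iff₀ (by positivity)]
  calc c ^ 2 * ‖u - g u • x‖ ^ 2 ≤ c ^ 2 * (r + d) ^ 2 := by gcongr
    _ ≤ 2 * (c ^ 2 * r ^ 2) + 2 * c ^ 2 * d ^ 2 := by
      nlinarith [sq_nonneg (r - d), sq_nonneg c]
    _ ≤ d * (1 + 2 * c ^ 2) := by
      nlinarith [mul_nonneg (sq_nonneg c) (mul_nonneg hd0 (sub_nonneg.2 hd1))]
    _ ≤ (1 - g u ^ 2) * (1 + 2 * c ^ 2) := by
      gcongr
      nlinarith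

lemma mul_norm_sub_smul_sq_le
    (hconv : ∀ a b : X, ‖a‖ ≤ 1 → ‖b‖ ≤ 1 →
      c ^ 2 * ‖a - b‖ ^ 2 ≤ 1 - ‖(1 / 2 : ℝ) • (a + b)‖)
    (hx : ‖x‖ = 1) (hg : ‖g‖ ≤ 1) (hgx : g x = 1) (z : X) :
    c ^ 2 / (1 + 2 * c ^ 2) * ‖z - g z • x‖ ^ 2 ≤ ‖z‖ ^ 2 - g z ^ 2 := by
  obtain ⟨r, u, hu, hgu, rfl⟩ : ∃ (r : ℝ) (u : X), ‖u‖ = 1 ∧ 0 ≤ g u ∧ z = r • u := by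
    obtain ⟨r, u, hu, rfl⟩ : ∃ (r : ℝ) (u : X), ‖u‖ = 1 ∧ z = r • u := by
      rcases eq_or_ne z 0 with rfl | hz
      · exact ⟨0, x, hx, (zero_smul ℝ x).symm⟩
      · exact ⟨‖z‖, ‖z‖⁻¹ • z, norm_smul_inv_norm hz,
          (smul_inv_smul₀ (norm_ne_zero_iff.2 hz) z).symm⟩
    rcases le_total 0 (g u) with hgu | hgu
    · exact ⟨r, u, hu, hgu, rfl⟩
    · refine ⟨-r, -u, by rwa [norm_neg], by simpa using hgu, ?_⟩
      rw [smul_neg, neg_smul, neg_neg]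
  have hunit := mul_norm_sub_smul_sq_le_of_norm_eq_one hconv hx hg hgx hu hgu
  have hsub : r • u - g (r • u) • x = r • (u - g u • x) := by
    rw [map_smul, smul_eq_mul, smul_sub, smul_smul]
  rw [hsub, norm_smul, norm_smul, hu, map_smul, smul_eq_mul, Real.norm_eq_abs]
  nlinarith [mul_le_mul_of_nonneg_left hunit (sq_nonneg r), sq_abs r]

end NormingFunctional

section EllipsoidForm

variable {X E : Type*} [AddCommGroup X] [Module ℝ X] [NormedAddCommGroup E]
  [InnerProductSpace ℝ E]

noncomputable def ellipsoidForm (g : X →ₗ[ℝ] ℝ) (p : X →ₗ[ℝ] E) : BilinForm ℝ X :=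
  (LinearMap.mul ℝ ℝ).compl₁₂ g g + (innerₗ E).compl₁₂ p p

variable (g : X →ₗ[ℝ] ℝ) (p : X →ₗ[ℝ] E)

lemma ellipsoidForm_apply (z w : X) : ellipsoidForm g p z w = g z * g w + ⟪p z, p w⟫ := rfl

lemma ellipsoidForm_self (z : X) : ellipsoidForm g p z z = g z ^ 2 + ‖p z‖ ^ 2 := by
  rw [ellipsoidForm_apply, real_inner_self_eq_norm_sq]
  ring

lemma ellipsoidForm_comm (z w : X) : ellipsoidForm g p z w = ellipsoidForm g p w z := by
  rw [ellipsoidForm_apply, ellipsoidForm_apply, mul_comm, real_inner_comm]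

lemma ellipsoidForm_self_pos (hinj : ∀ z, g z = 0 → p z = 0 → z = 0) {z : X} (hz : z ≠ 0) :
    0 < ellipsoidForm g p z z := by
  rw [ellipsoidForm_self]
  by_cases hgz : g z = 0
  · have hpz : p z ≠ 0 := fun hpz => hz (hinj z hgz hpz)
    positivity
  · positivity

end EllipsoidForm

lemma exists_linearMap_euclideanSpace (X : Type*) [NormedAddCommGroup X] [NormedSpace ℝ X]
    [FiniteDimensional ℝ X] {s : ℝ} (hs : 0 < s) :
    ∃ (n : ℕ) (e : X →ₗ[ℝ] EuclideanSpace ℝ (Fin n)) (m : ℝ), 0 ≤ m ∧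
      (∀ z, ‖e z‖ ≤ s * ‖z‖) ∧ ∀ z, ‖z‖ ≤ m * ‖e z‖ := by
  let T : X ≃L[ℝ] EuclideanSpace ℝ (Fin (Module.finrank ℝ X)) := toEuclidean
  set M := ‖T.toContinuousLinearMap‖ + 1
  have hM : 0 < M := by positivity
  refine ⟨_, (s / M) • T.toLinearEquiv.toLinearMap, ‖T.symm.toContinuousLinearMap‖ * M / s,
    by positivity, fun z => ?_, fun z => ?_⟩
  · have hT : ‖T z‖ ≤ M * ‖z‖ := T.toContinuousLinearMap.le_of_opNorm_le (by linarith) z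
    calc ‖(s / M) • T z‖ = s / M * ‖T z‖ := by
          rw [norm_smul, Real.norm_of_nonneg (by positivity)]
      _ ≤ s / M * (M * ‖z‖) := by gcongr
      _ = s * ‖z‖ := by field_simp
  · calc ‖z‖ = ‖T.symm (T z)‖ := by rw [T.symm_apply_apply]
      _ ≤ ‖T.symm.toContinuousLinearMap‖ * ‖T z‖ := T.symm.toContinuousLinearMap.le_opNorm _
      _ = ‖T.symm.toContinuousLinearMap‖ * M / s * ‖(s / M) • T z‖ := by
        rw [norm_smul, Real.norm_of_nonneg (by positivity)]
        field_simp

lemma exists_outer_ellipsoidForm {X E : Type*} [NormedAddCommGroup X] [NormedSpace ℝ X]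
    [NormedAddCommGroup E] [InnerProductSpace ℝ E] {x : X} (hx : ‖x‖ = 1) {g : X →ₗ[ℝ] ℝ}
    (hgx : g x = 1) (e : X →ₗ[ℝ] E) {m : ℝ} (hm0 : 0 ≤ m) (hm : ∀ z, ‖z‖ ≤ m * ‖e z‖)
    (hge : ∀ z, ‖e (z - g z • x)‖ ^ 2 ≤ ‖z‖ ^ 2 - g z ^ 2) :
    ∃ B : BilinForm ℝ X, (∀ z w, B z w = B w z) ∧ (∀ z, z ≠ 0 → 0 < B z z) ∧
      (∀ z, B z z ≤ ‖z‖ ^ 2) ∧ B x x = 1 ∧ ∀ z, B z z ≤ 1 → ‖z‖ ≤ m + 1 := by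
  set p := e ∘ₗ (LinearMap.id - g.smulRight x)
  have hp : ∀ z, p z = e (z - g z • x) := fun z => rfl
  refine ⟨ellipsoidForm g p, ellipsoidForm_comm _ _,
    fun z hz => ellipsoidForm_self_pos _ _ ?_ hz, fun z => ?_, ?_, fun z hz => ?_⟩
  · intro z hgz hpz
    rw [hp, hgz, zero_smul, sub_zero] at hpz
    simpa [hpz] using hm z
  · rw [ellipsoidForm_self, hp]
    linarith [hge z]
  · rw [ellipsoidForm_self, hp, hgx, one_smul, sub_self, map_zero, norm_zero]
    norm_num
  · rw [ellipsoidForm_self, hp] at hz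
    have hgz : |g z| ≤ 1 := (sq_le_one_iff_abs_le_one _).1 (by nlinarith)
    have hpz : ‖e (z - g z • x)‖ ≤ 1 := by
      simpa using (sq_le_one_iff_abs_le_one _).1 (by nlinarith : ‖e (z - g z • x)‖ ^ 2 ≤ 1)
    calc ‖z‖ = ‖(z - g z • x) + g z • x‖ := by rw [sub_add_cancel]
      _ ≤ ‖z - g z • x‖ + ‖g z • x‖ := norm_add_le _ _
      _ ≤ m * 1 + 1 := by
        rw [norm_smul, hx, mul_one, Real.norm_eq_abs]
        gcongr
        exact (hm _).trans (by gcongr)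
      _ = m + 1 := by ring

/-- If the modulus of uniform convexity of a finite-dimensional space satisfies
`δ(ε) ≥ c²ε²`, then there is `α > 0` such that every unit vector `x` admits an outer
ellipsoid `F = {z | B z z ≤ 1}` (so `B z z ≤ ‖z‖²` and `B x x = 1`) with `F ⊆ α·B_X`. -/
theorem stmt15 (X : Type*) [NormedAddCommGroup X] [NormedSpace ℝ X] [FiniteDimensional ℝ X]
    (c : ℝ) (hc : 0 < c)
    (hδ : ∀ ε ∈ Set.Ioc (0 : ℝ) 2, c ^ 2 * ε ^ 2 ≤ uconvMod X ε) :
    ∃ α > (0 : ℝ), ∀ x : X, ‖x‖ = 1 →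
      ∃ B : LinearMap.BilinForm ℝ X, (∀ z w, B z w = B w z) ∧
        (∀ z, z ≠ 0 → 0 < B z z) ∧ (∀ z, B z z ≤ ‖z‖ ^ 2) ∧ B x x = 1 ∧
        ∀ z, B z z ≤ 1 → ‖z‖ ≤ α := by
  set t₀ := c ^ 2 / (1 + 2 * c ^ 2)
  obtain ⟨n, e, m, hm0, he, hm⟩ :=
    exists_linearMap_euclideanSpace X (Real.sqrt_pos.2 (by positivity : 0 < t₀))
  refine ⟨m + 1, by positivity, fun x hx => ?_⟩
  obtain ⟨g, hg, hgx⟩ := exists_dual_vector ℝ x (by simp [hx])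
  rw [hx, RCLike.ofReal_real_eq_id, id] at hgx
  have hest :=
    mul_norm_sub_smul_sq_le (fun _ _ => sq_mul_sq_norm_sub_le_of_uconvMod hδ) hx hg.le hgx
  refine exists_outer_ellipsoidForm hx hgx e hm0 hm fun z => ?_
  calc ‖e (z - g z • x)‖ ^ 2 ≤ (√t₀ * ‖z - g z • x‖) ^ 2 := by gcongr; exact he _
    _ = t₀ * ‖z - g z • x‖ ^ 2 := by rw [mul_pow, Real.sq_sqrt (by positivity)]
    _ ≤ ‖z‖ ^ 2 - g z ^ 2 := hest z
end

section
/- Let a₁ < 0 < b₁ and let f : [a₁, b₁] → ℝ and g : [ã₁, b̃₁] → ℝ (with 0 in both domains) be twice differentiable convex functions with f(0) = g(0) = f'(0) = g'(0) = 0, and suppose f''(u)/(1+f'(u)²)^{3/2} > g''(v)/(1+g'(v)²)^{3/2} > 0 whenever u, v are in the respective domains. Then f(x) > g(x) for every x ≠ 0 in the intersection of the domains. -/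
/-!
Along the graph of `f`, the sine of the tangent angle, `sin (arctan (f' t))`, has derivative
`f'' t / (1 + f' t ^ 2) ^ (3 / 2)` in `t`: the curvature. So `sin ∘ arctan ∘ f' - sin ∘ arctan ∘ g'`
is strictly increasing and vanishes at `0`; as `sin ∘ arctan` is strictly increasing, `f' - g'` has
the sign of `t`. Hence `f - g` decreases up to `0` and increases after it, with minimum `f 0 - g 0 = 0`.
-/

open Real Set

lemma hasDerivAt_sin_arctan (y : ℝ) :
    HasDerivAt (fun y ↦ sin (arctan y)) ((1 + y ^ 2) ^ ((3 : ℝ) / 2))⁻¹ y := by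
  have hpos : 0 < 1 + y ^ 2 := by positivity
  have h32 : (1 + y ^ 2) ^ ((3 : ℝ) / 2) = (1 + y ^ 2) * √(1 + y ^ 2) := by
    rw [sqrt_eq_rpow, ← rpow_one_add' hpos.le (by norm_num)]
    norm_num
  refine ((hasDerivAt_sin (arctan y)).comp y (hasDerivAt_arctan y)).congr_deriv ?_
  rw [cos_arctan, h32]
  field_simp

lemma strictMonoOn_Icc_of_hasDerivAt_pos {F F' : ℝ → ℝ} {a b : ℝ}
    (hF : ∀ t ∈ Icc a b, HasDerivAt F (F' t) t) (hF' : ∀ t ∈ Ioo a b, 0 < F' t) :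
    StrictMonoOn F (Icc a b) :=
  strictMonoOn_of_hasDerivWithinAt_pos (convex_Icc a b)
    (fun t ht ↦ (hF t ht).continuousAt.continuousWithinAt)
    (fun t ht ↦ (hF t (interior_subset ht)).hasDerivWithinAt)
    (fun t ht ↦ hF' t (by rwa [interior_Icc] at ht))

lemma strictAntiOn_Icc_of_hasDerivAt_neg {F F' : ℝ → ℝ} {a b : ℝ}
    (hF : ∀ t ∈ Icc a b, HasDerivAt F (F' t) t) (hF' : ∀ t ∈ Ioo a b, F' t < 0) :
    StrictAntiOn F (Icc a b) := by
  have := strictMonoOn_Icc_of_hasDerivAt_pos (fun t ht ↦ (hF t ht).neg)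
    (fun t ht ↦ neg_pos.2 (hF' t ht))
  exact fun x hx y hy hxy ↦ neg_lt_neg_iff.1 (this hx hy hxy)

lemma pos_of_hasDerivAt_of_deriv_sign {D D' : ℝ → ℝ} {a b : ℝ} (ha : a ≤ 0) (hb : 0 ≤ b)
    (hD : ∀ t ∈ Icc a b, HasDerivAt D (D' t) t) (hD0 : D 0 = 0)
    (hpos : ∀ t ∈ Icc a b, 0 < t → 0 < D' t) (hneg : ∀ t ∈ Icc a b, t < 0 → D' t < 0) :
    ∀ x ∈ Icc a b, x ≠ 0 → 0 < D x := by
  intro x hx hx0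
  rcases hx0.lt_or_gt with hx0 | hx0
  · have hanti : StrictAntiOn D (Icc a 0) :=
      strictAntiOn_Icc_of_hasDerivAt_neg (fun t ht ↦ hD t ⟨ht.1, ht.2.trans hb⟩)
        (fun t ht ↦ hneg t ⟨ht.1.le, ht.2.le.trans hb⟩ ht.2)
    simpa [hD0] using hanti ⟨hx.1, hx0.le⟩ ⟨ha, le_rfl⟩ hx0
  · have hmono : StrictMonoOn D (Icc 0 b) :=
      strictMonoOn_Icc_of_hasDerivAt_pos (fun t ht ↦ hD t ⟨ha.trans ht.1, ht.2⟩)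
        (fun t ht ↦ hpos t ⟨ha.trans ht.1.le, ht.2.le⟩ ht.1)
    simpa [hD0] using hmono ⟨le_rfl, hb⟩ ⟨hx0.le, hx.2⟩ hx0

lemma hasDerivAt_sin_arctan_comp {u : ℝ → ℝ} {u' t : ℝ} (h : HasDerivAt u u' t) :
    HasDerivAt (fun s ↦ sin (arctan (u s))) (u' / (1 + u t ^ 2) ^ ((3 : ℝ) / 2)) t :=
  ((hasDerivAt_sin_arctan (u t)).comp t h).congr_deriv (div_eq_inv_mul _ _).symm

lemma slope_sub_sign_of_curvature_lt {f' g' f'' g'' : ℝ → ℝ} {a b : ℝ} (ha : a ≤ 0) (hb : 0 ≤ b)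
    (hf'' : ∀ t ∈ Icc a b, HasDerivAt f' (f'' t) t)
    (hg'' : ∀ t ∈ Icc a b, HasDerivAt g' (g'' t) t)
    (hf'0 : f' 0 = 0) (hg'0 : g' 0 = 0)
    (hcurv : ∀ t ∈ Icc a b,
      g'' t / (1 + g' t ^ 2) ^ ((3 : ℝ) / 2) < f'' t / (1 + f' t ^ 2) ^ ((3 : ℝ) / 2)) :
    (∀ t ∈ Icc a b, 0 < t → 0 < f' t - g' t) ∧ (∀ t ∈ Icc a b, t < 0 → f' t - g' t < 0) := by
  have hmono : StrictMonoOn (fun t ↦ sin (arctan (f' t)) - sin (arctan (g' t))) (Icc a b) :=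
    strictMonoOn_Icc_of_hasDerivAt_pos
      (fun t ht ↦
        (hasDerivAt_sin_arctan_comp (hf'' t ht)).sub (hasDerivAt_sin_arctan_comp (hg'' t ht)))
      (fun t ht ↦ sub_pos.2 (hcurv t (Ioo_subset_Icc_self ht)))
  have h0 : (0 : ℝ) ∈ Icc a b := ⟨ha, hb⟩
  constructor
  · intro t ht htpos
    have := hmono h0 ht htpos
    simp only [hf'0, hg'0, arctan_zero, sin_zero, sub_zero, sub_pos] at this
    exact sub_pos.2 (sin_arctan_strictMono.lt_iff_lt.1 this)
  · intro t ht htneg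
    have := hmono ht h0 htneg
    simp only [hf'0, hg'0, arctan_zero, sin_zero, sub_zero, sub_neg] at this
    exact sub_neg.2 (sin_arctan_strictMono.lt_iff_lt.1 this)

theorem stmt16_general (a₁ b₁ a₂ b₂ : ℝ) (ha₁ : a₁ < 0) (hb₁ : 0 < b₁) (ha₂ : a₂ ≤ 0) (hb₂ : 0 ≤ b₂)
    (f g f' g' f'' g'' : ℝ → ℝ)
    (hf' : ∀ u ∈ Set.Icc a₁ b₁, HasDerivAt f (f' u) u)
    (hf'' : ∀ u ∈ Set.Icc a₁ b₁, HasDerivAt f' (f'' u) u)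
    (hg' : ∀ v ∈ Set.Icc a₂ b₂, HasDerivAt g (g' v) v)
    (hg'' : ∀ v ∈ Set.Icc a₂ b₂, HasDerivAt g' (g'' v) v)
    (hf0 : f 0 = 0) (hg0 : g 0 = 0) (hf'0 : f' 0 = 0) (hg'0 : g' 0 = 0)
    (hcurv : ∀ u ∈ Set.Icc a₁ b₁, ∀ v ∈ Set.Icc a₂ b₂,
      g'' v / (1 + g' v ^ 2) ^ ((3 : ℝ) / 2) < f'' u / (1 + f' u ^ 2) ^ ((3 : ℝ) / 2) ∧
      0 < g'' v / (1 + g' v ^ 2) ^ ((3 : ℝ) / 2)) :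
    ∀ x ∈ Set.Icc a₁ b₁ ∩ Set.Icc a₂ b₂, x ≠ 0 → g x < f x := by
  rw [Icc_inter_Icc]
  have ha : a₁ ⊔ a₂ ≤ 0 := sup_le ha₁.le ha₂
  have hb : 0 ≤ b₁ ⊓ b₂ := le_inf hb₁.le hb₂
  have h₁ : Icc (a₁ ⊔ a₂) (b₁ ⊓ b₂) ⊆ Icc a₁ b₁ := Icc_subset_Icc le_sup_left inf_le_left
  have h₂ : Icc (a₁ ⊔ a₂) (b₁ ⊓ b₂) ⊆ Icc a₂ b₂ := Icc_subset_Icc le_sup_right inf_le_right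
  obtain ⟨hpos, hneg⟩ := slope_sub_sign_of_curvature_lt ha hb
    (fun t ht ↦ hf'' t (h₁ ht)) (fun t ht ↦ hg'' t (h₂ ht)) hf'0 hg'0
    (fun t ht ↦ (hcurv t (h₁ ht) t (h₂ ht)).1)
  intro x hx hx0
  exact sub_pos.1 <| pos_of_hasDerivAt_of_deriv_sign ha hb
    (fun t ht ↦ (hf' t (h₁ ht)).sub (hg' t (h₂ ht))) (by simp [hf0, hg0]) hpos hneg x hx hx0

/-- Comparison lemma for graphs: if `f` and `g` are twice differentiable convex functions
with `f(0)=g(0)=f'(0)=g'(0)=0` and the curvature of the graph of `f` strictly dominates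
that of `g` (both positive), then `f > g` away from `0`. -/
theorem stmt16 (a₁ b₁ a₂ b₂ : ℝ) (ha₁ : a₁ < 0) (hb₁ : 0 < b₁) (ha₂ : a₂ ≤ 0) (hb₂ : 0 ≤ b₂)
    (f g f' g' f'' g'' : ℝ → ℝ)
    (hf' : ∀ u ∈ Set.Icc a₁ b₁, HasDerivAt f (f' u) u)
    (hf'' : ∀ u ∈ Set.Icc a₁ b₁, HasDerivAt f' (f'' u) u)
    (hg' : ∀ v ∈ Set.Icc a₂ b₂, HasDerivAt g (g' v) v)
    (hg'' : ∀ v ∈ Set.Icc a₂ b₂, HasDerivAt g' (g'' v) v)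
    (hfconv : ConvexOn ℝ (Set.Icc a₁ b₁) f) (hgconv : ConvexOn ℝ (Set.Icc a₂ b₂) g)
    (hf0 : f 0 = 0) (hg0 : g 0 = 0) (hf'0 : f' 0 = 0) (hg'0 : g' 0 = 0)
    (hcurv : ∀ u ∈ Set.Icc a₁ b₁, ∀ v ∈ Set.Icc a₂ b₂,
      g'' v / (1 + g' v ^ 2) ^ ((3 : ℝ) / 2) < f'' u / (1 + f' u ^ 2) ^ ((3 : ℝ) / 2) ∧
      0 < g'' v / (1 + g' v ^ 2) ^ ((3 : ℝ) / 2)) :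
    ∀ x ∈ Set.Icc a₁ b₁ ∩ Set.Icc a₂ b₂, x ≠ 0 → g x < f x :=
  stmt16_general a₁ b₁ a₂ b₂ ha₁ hb₁ ha₂ hb₂ f g f' g' f'' g'' hf' hf'' hg' hg'' hf0 hg0 hf'0 hg'0
    hcurv
end

section
/- Let a, v ∈ ℝ² be linearly independent, 0 < ε < 1, and let T be the linear map with T a = a and T v = (1−ε)v. Let Γ be a twice-differentiable regular curve with Γ(0) = a and Γ'(0) = v/‖v‖₂, and set Γ̃ = T ∘ Γ. Then the curvature of Γ̃ at parameter 0 equals (1−ε)^{−2} times the curvature of Γ at parameter 0. -/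
/-!
`T` scales the tangent vector `Γ'(0)`, which is parallel to `v`, by `1 - ε`, and since `T - id`
maps into `ℝ v`, it changes `Γ''(0)` only by a tangential vector. The Gram determinant
`‖p‖²‖q‖² - ⟪p, q⟫²` is unchanged by adding a multiple of `p` to `q` and is multiplied by `c²`
when `p` is scaled by `c`, so the curvature is multiplied by `|c| / |c|³ = c⁻²`.
-/

open RealInnerProductSpace

section Curvature

variable {E : Type*} [NormedAddCommGroup E] [InnerProductSpace ℝ E]

/-- The curvature at a parameter where a curve has velocity `p` and acceleration `q`. -/
noncomputable def curvature (p q : E) : ℝ :=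
  √(‖p‖ ^ 2 * ‖q‖ ^ 2 - ⟪p, q⟫ ^ 2) / ‖p‖ ^ 3

theorem gram_smul_add_smul (c s : ℝ) (p q : E) :
    ‖c • p‖ ^ 2 * ‖q + s • p‖ ^ 2 - ⟪c • p, q + s • p⟫ ^ 2 =
      c ^ 2 * (‖p‖ ^ 2 * ‖q‖ ^ 2 - ⟪p, q⟫ ^ 2) := by
  simp only [← real_inner_self_eq_norm_sq, inner_add_left, inner_add_right,
    real_inner_smul_left, real_inner_smul_right, real_inner_comm q p]
  ring

/-- No hypothesis on `c` or `p` is needed: for `c = 0` or `p = 0` both sides are `0`, since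
`x / 0 = 0`. -/
theorem curvature_smul_add_smul (c s : ℝ) (p q : E) :
    curvature (c • p) (q + s • p) = (c ^ 2)⁻¹ * curvature p q := by
  rw [curvature, curvature, gram_smul_add_smul, Real.sqrt_mul (sq_nonneg c), Real.sqrt_sq_eq_abs,
    norm_smul, Real.norm_eq_abs]
  rcases eq_or_ne c 0 with rfl | hc
  · simp
  rw [← sq_abs c]
  field_simp

end Curvature

theorem exists_apply_eq_add_smul {M : Type*} [AddCommGroup M] [Module ℝ M] (T : M →ₗ[ℝ] M)
    {a v : M} (hspan : Submodule.span ℝ {a, v} = ⊤) {μ : ℝ} (hTa : T a = a) (hTv : T v = μ • v)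
    (q : M) : ∃ s : ℝ, T q = q + s • v := by
  obtain ⟨x, y, rfl⟩ := Submodule.mem_span_pair.1 (hspan ▸ Submodule.mem_top : q ∈ _)
  refine ⟨y * (μ - 1), ?_⟩
  simp only [map_add, map_smul, hTa, hTv, smul_smul]
  module

theorem stmt17_general (a v : EuclideanSpace ℝ (Fin 2)) (hli : LinearIndependent ℝ ![a, v])
    (ε : ℝ)
    (T : EuclideanSpace ℝ (Fin 2) →ₗ[ℝ] EuclideanSpace ℝ (Fin 2))
    (hTa : T a = a) (hTv : T v = (1 - ε) • v)
    (Γ' : ℝ → EuclideanSpace ℝ (Fin 2)) (Γ''₀ : EuclideanSpace ℝ (Fin 2))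
    (hΓ'0 : Γ' 0 = ‖v‖⁻¹ • v) :
    Real.sqrt (‖T (Γ' 0)‖ ^ 2 * ‖T Γ''₀‖ ^ 2 - (inner ℝ (T (Γ' 0)) (T Γ''₀) : ℝ) ^ 2) /
        ‖T (Γ' 0)‖ ^ 3 =
      ((1 - ε) ^ 2)⁻¹ *
        (Real.sqrt (‖Γ' 0‖ ^ 2 * ‖Γ''₀‖ ^ 2 - (inner ℝ (Γ' 0) Γ''₀ : ℝ) ^ 2) / ‖Γ' 0‖ ^ 3) := by
  have hspan : Submodule.span ℝ {a, v} = ⊤ := by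
    simpa [Matrix.range_cons, Matrix.range_empty, Set.union_singleton, Set.pair_comm] using
      hli.span_eq_top_of_card_eq_finrank (by simp)
  have hv : ‖v‖ ≠ 0 := norm_ne_zero_iff.2 (hli.ne_zero 1)
  have hv_eq : v = ‖v‖ • Γ' 0 := by rw [hΓ'0, smul_smul, mul_inv_cancel₀ hv, one_smul]
  obtain ⟨s, hs⟩ := exists_apply_eq_add_smul T hspan hTa hTv Γ''₀
  have hTp : T (Γ' 0) = (1 - ε) • Γ' 0 := by rw [hΓ'0, map_smul, hTv, smul_comm]
  have hTq : T Γ''₀ = Γ''₀ + (s * ‖v‖) • Γ' 0 := by rw [hs, mul_smul, ← hv_eq]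
  simpa only [curvature, hTp, hTq] using curvature_smul_add_smul (1 - ε) (s * ‖v‖) (Γ' 0) Γ''₀

/-- If `T a = a`, `T v = (1-ε)v` with `a, v` linearly independent and `0 < ε < 1`, and `Γ`
is a regular twice-differentiable curve with `Γ(0) = a`, `Γ'(0) = v/‖v‖`, then the
curvature of `T ∘ Γ` at `0` is `(1-ε)⁻²` times the curvature of `Γ` at `0`, where the
curvature at `0` of a curve with first and second derivatives `p, q` there is
`√(‖p‖²‖q‖² − ⟨p,q⟩²)/‖p‖³`. -/
theorem stmt17 (a v : EuclideanSpace ℝ (Fin 2)) (hli : LinearIndependent ℝ ![a, v])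
    (ε : ℝ) (hε0 : 0 < ε) (hε1 : ε < 1)
    (T : EuclideanSpace ℝ (Fin 2) →ₗ[ℝ] EuclideanSpace ℝ (Fin 2))
    (hTa : T a = a) (hTv : T v = (1 - ε) • v)
    (Γ Γ' : ℝ → EuclideanSpace ℝ (Fin 2)) (Γ''₀ : EuclideanSpace ℝ (Fin 2))
    (hΓ' : ∀ t, HasDerivAt Γ (Γ' t) t) (hreg : ∀ t, Γ' t ≠ 0)
    (hΓ'' : HasDerivAt Γ' Γ''₀ 0)
    (hΓ0 : Γ 0 = a) (hΓ'0 : Γ' 0 = ‖v‖⁻¹ • v) :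
    Real.sqrt (‖T (Γ' 0)‖ ^ 2 * ‖T Γ''₀‖ ^ 2 - (inner ℝ (T (Γ' 0)) (T Γ''₀) : ℝ) ^ 2) /
        ‖T (Γ' 0)‖ ^ 3 =
      ((1 - ε) ^ 2)⁻¹ *
        (Real.sqrt (‖Γ' 0‖ ^ 2 * ‖Γ''₀‖ ^ 2 - (inner ℝ (Γ' 0) Γ''₀ : ℝ) ^ 2) / ‖Γ' 0‖ ^ 3) :=
  stmt17_general a v hli ε T hTa hTv Γ' Γ''₀ hΓ'0
end

section
/- Let ‖·‖ be a norm on ℝⁿ whose square is C² away from the origin, and for ε > 0 define ‖x‖_{(ε)} = sqrt(‖x‖² + ε‖x‖₂²). Then ‖·‖_{(ε)} is a norm on ℝⁿ, its square is C² away from the origin, and its second differential (the Hessian of x ↦ ½‖x‖_{(ε)}²) is positive definite at every nonzero point. -/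
/-!
The square of a norm `p` is convex, so wherever it is twice differentiable its Hessian is
positive semidefinite: restricted to a line, a convex function has a monotone derivative.
The Hessian of `½ ε ‖·‖₂²` is `ε ⟪v, v⟫`, so adding it makes the Hessian of
`½ (p² + ε ‖·‖₂²)` at least `ε ‖v‖²`. That `√(p² + ε ‖·‖₂²)` is again a norm is Minkowski's
inequality for the weighted Euclidean norm `(a, b) ↦ √(a² + ε b²)` on `ℝ²`.
-/

open Set Filter Topology

theorem Real.sqrt_add_sq_add_mul_add_sq_le {ε : ℝ} (hε : 0 ≤ ε) (a b c d : ℝ) :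
    √((a + c) ^ 2 + ε * (b + d) ^ 2) ≤ √(a ^ 2 + ε * b ^ 2) + √(c ^ 2 + ε * d ^ 2) := by
  have hab := Real.sq_sqrt (by positivity : 0 ≤ a ^ 2 + ε * b ^ 2)
  have hcd := Real.sq_sqrt (by positivity : 0 ≤ c ^ 2 + ε * d ^ 2)
  have cauchy_schwarz :
      a * c + ε * (b * d) ≤ √(a ^ 2 + ε * b ^ 2) * √(c ^ 2 + ε * d ^ 2) := by
    rw [← Real.sqrt_mul (by positivity)]
    exact (le_abs_self _).trans
      (Real.abs_le_sqrt (by nlinarith [mul_nonneg hε (sq_nonneg (a * d - b * c))]))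
  rw [Real.sqrt_le_left (by positivity)]
  nlinarith

theorem ConvexOn.nonneg_of_hasDerivAt_deriv {f : ℝ → ℝ} {s : Set ℝ} {t f'' : ℝ}
    (hf : ConvexOn ℝ s f) (hs : s ∈ 𝓝 t) (hd : ∀ᶠ u in 𝓝 t, DifferentiableAt ℝ f u)
    (hf'' : HasDerivAt (deriv f) f'' t) : 0 ≤ f'' := by
  obtain ⟨δ, hδ, hball⟩ := Metric.mem_nhds_iff.mp (inter_mem hs hd)
  have hmono : MonotoneOn (deriv f) (Metric.ball t δ) :=
    (hf.subset (fun u hu => (hball hu).1) (convex_ball t δ)).monotoneOn_deriv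
      fun u hu => (hball hu).2
  exact hf''.hasDerivWithinAt.nonneg_of_monotoneOn
    (uniqueDiffWithinAt_iff_accPt.mp (uniqueDiffWithinAt_of_mem_nhds (Metric.ball_mem_nhds t hδ)))
    hmono

theorem ConvexOn.iteratedFDeriv_two_nonneg {E : Type*} [NormedAddCommGroup E] [NormedSpace ℝ E]
    {f : E → ℝ} {s : Set E} {x : E} (hf : ConvexOn ℝ s f) (hs : s ∈ 𝓝 x)
    (hx : ContDiffAt ℝ 2 f x) (v : E) :
    0 ≤ iteratedFDeriv ℝ 2 f x ![v, v] := by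
  let line : ℝ →ᵃ[ℝ] E := AffineMap.lineMap x (x + v)
  have hline : ∀ t : ℝ, line t = x + t • v := fun t => by
    simp [line, AffineMap.lineMap_apply, add_comm]
  have hline_nhds : ∀ u ∈ 𝓝 x, line ⁻¹' u ∈ 𝓝 0 := fun u hu =>
    (AffineMap.lineMap_continuous.continuousAt (x := 0)).preimage_mem_nhds
      (by simpa [hline] using hu)
  have hconv : ConvexOn ℝ (line ⁻¹' s) fun t : ℝ => f (x + t • v) := by
    simpa only [Function.comp_def, hline] using hf.comp_affineMap line
  have hdiff : ∀ᶠ t in 𝓝 (0 : ℝ), DifferentiableAt ℝ f (x + t • v) := by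
    filter_upwards [hline_nhds _ (hx.eventually (by simp))]
      with t (ht : ContDiffAt ℝ 2 f (line t))
    rw [← hline]
    exact ht.differentiableAt (by norm_num)
  have hderiv :
      deriv (fun t : ℝ => f (x + t • v)) =ᶠ[𝓝 0] fun t => fderiv ℝ f (x + t • v) v := by
    filter_upwards [hdiff] with t ht using ht.deriv_comp_add_smul
  have hF : HasFDerivAt (fderiv ℝ f) (fderiv ℝ (fderiv ℝ f) x) (x + (0 : ℝ) • v) := by
    rw [zero_smul, add_zero]
    have h1 : ContDiffAt ℝ 1 (fderiv ℝ f) x := hx.fderiv_right (by norm_num)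
    exact (h1.differentiableAt (by norm_num)).hasFDerivAt
  have hL : HasDerivAt (fun t : ℝ => x + t • v) v 0 := by
    simpa using ((hasDerivAt_id (0 : ℝ)).smul_const v).const_add x
  have hF_line : HasDerivAt (fun t : ℝ => fderiv ℝ f (x + t • v)) (fderiv ℝ (fderiv ℝ f) x v) 0 :=
    hF.comp_hasDerivAt (0 : ℝ) hL
  have hf'' :
      HasDerivAt (fun t : ℝ => fderiv ℝ f (x + t • v) v) (fderiv ℝ (fderiv ℝ f) x v v) 0 := by
    simpa using hF_line.clm_apply (hasDerivAt_const (0 : ℝ) v)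
  rw [iteratedFDeriv_two_apply]
  exact hconv.nonneg_of_hasDerivAt_deriv (hline_nhds s hs)
    (hdiff.mono fun t ht => ht.comp t (by fun_prop)) (hf''.congr_of_eventuallyEq hderiv)

theorem iteratedFDeriv_two_norm_sq_apply {F : Type*} [NormedAddCommGroup F]
    [InnerProductSpace ℝ F] (x v w : F) :
    iteratedFDeriv ℝ 2 (fun y : F => ‖y‖ ^ 2) x ![v, w] = 2 * inner ℝ v w := by
  rw [iteratedFDeriv_two_apply, fderiv_norm_sq, ← FunLike.coe_smul, ContinuousLinearMap.fderiv]
  simp only [Matrix.cons_val_zero, Matrix.cons_val_one, Matrix.cons_val_fin_one,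
    FunLike.coe_smul, Pi.smul_apply, nsmul_eq_mul, Nat.cast_ofNat]
  rw [innerSL_apply_apply]

namespace Seminorm

section SeminormedAddCommGroup

variable {E : Type*} [SeminormedAddCommGroup E] [NormedSpace ℝ E]

/-- The norm `‖·‖_(ε)` of the paper, for `p = ‖·‖`. -/
noncomputable def regularize (p : Seminorm ℝ E) (ε : ℝ) (hε : 0 ≤ ε) : Seminorm ℝ E :=
  .of (fun x => √(p x ^ 2 + ε * ‖x‖ ^ 2))
    (fun x y => by
      refine (Real.sqrt_le_sqrt ?_).trans (Real.sqrt_add_sq_add_mul_add_sq_le hε _ _ _ _)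
      gcongr
      exacts [map_add_le_add p x y, norm_add_le x y])
    (fun c x => by
      rw [map_smul_eq_mul, norm_smul,
        show (‖c‖ * p x) ^ 2 + ε * (‖c‖ * ‖x‖) ^ 2 = ‖c‖ ^ 2 * (p x ^ 2 + ε * ‖x‖ ^ 2) by ring,
        Real.sqrt_mul (sq_nonneg _), Real.sqrt_sq (norm_nonneg c)])

variable (p : Seminorm ℝ E) {ε : ℝ} (hε : 0 ≤ ε)

@[simp]
theorem regularize_apply (x : E) : p.regularize ε hε x = √(p x ^ 2 + ε * ‖x‖ ^ 2) := rfl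

theorem regularize_sq (x : E) : p.regularize ε hε x ^ 2 = p x ^ 2 + ε * ‖x‖ ^ 2 :=
  Real.sq_sqrt (by positivity)

end SeminormedAddCommGroup

theorem regularize_eq_zero_iff {E : Type*} [NormedAddCommGroup E] [NormedSpace ℝ E]
    (p : Seminorm ℝ E) {ε : ℝ} (hε : 0 < ε) (x : E) :
    p.regularize ε hε.le x = 0 ↔ x = 0 := by
  rw [regularize_apply, Real.sqrt_eq_zero (by positivity),
    add_eq_zero_iff_of_nonneg (by positivity) (by positivity)]
  constructor
  · rintro ⟨-, h⟩
    simpa [hε.ne'] using h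
  · rintro rfl
    simp

theorem le_iteratedFDeriv_two_half_regularize_sq {F : Type*} [NormedAddCommGroup F]
    [InnerProductSpace ℝ F] (p : Seminorm ℝ F) {ε : ℝ} (hε : 0 ≤ ε) {x : F}
    (hp : ContDiffAt ℝ 2 (fun y => p y ^ 2) x) (v : F) :
    ε * ‖v‖ ^ 2 ≤ iteratedFDeriv ℝ 2 (fun y => 1 / 2 * p.regularize ε hε y ^ 2) x ![v, v] := by
  have hfun : (fun y => 1 / 2 * p.regularize ε hε y ^ 2) =
      fun y => (1 / 2 : ℝ) • (p y ^ 2 + ε • ‖y‖ ^ 2) := by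
    ext y
    rw [regularize_sq, smul_eq_mul, smul_eq_mul]
  have hnorm : ContDiffAt ℝ 2 (fun y : F => ‖y‖ ^ 2) x := (contDiff_norm_sq ℝ).contDiffAt
  have hconv : ConvexOn ℝ univ fun y => p y ^ 2 :=
    p.convexOn.pow (fun y _ => apply_nonneg p y) 2
  rw [hfun, iteratedFDeriv_const_smul_apply' (hp.add (hnorm.const_smul ε)),
    fun_iteratedFDeriv_add_apply hp (hnorm.const_smul ε), iteratedFDeriv_const_smul_apply' hnorm]
  simp only [smul_apply, add_apply, iteratedFDeriv_two_norm_sq_apply,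
    real_inner_self_eq_norm_sq, smul_eq_mul]
  nlinarith [hconv.iteratedFDeriv_two_nonneg univ_mem hp v]

end Seminorm

theorem stmt19_general (n : ℕ) (N : EuclideanSpace ℝ (Fin n) → ℝ)
    (hNs : ∀ (c : ℝ) x, N (c • x) = |c| * N x)
    (hNt : ∀ x y, N (x + y) ≤ N x + N y)
    (hNsm : ContDiffOn ℝ 2 (fun x => N x ^ 2) {(0 : EuclideanSpace ℝ (Fin n))}ᶜ)
    (ε : ℝ) (hε : 0 < ε) :
    (∀ x, Real.sqrt (N x ^ 2 + ε * ‖x‖ ^ 2) = 0 ↔ x = 0) ∧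
    (∀ (c : ℝ) x, Real.sqrt (N (c • x) ^ 2 + ε * ‖c • x‖ ^ 2) =
      |c| * Real.sqrt (N x ^ 2 + ε * ‖x‖ ^ 2)) ∧
    (∀ x y, Real.sqrt (N (x + y) ^ 2 + ε * ‖x + y‖ ^ 2) ≤
      Real.sqrt (N x ^ 2 + ε * ‖x‖ ^ 2) + Real.sqrt (N y ^ 2 + ε * ‖y‖ ^ 2)) ∧
    ContDiffOn ℝ 2 (fun x => Real.sqrt (N x ^ 2 + ε * ‖x‖ ^ 2) ^ 2)
      {(0 : EuclideanSpace ℝ (Fin n))}ᶜ ∧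
    (∀ x : EuclideanSpace ℝ (Fin n), x ≠ 0 → ∀ v : EuclideanSpace ℝ (Fin n), v ≠ 0 →
      0 < iteratedFDeriv ℝ 2
            (fun y => (1 / 2 : ℝ) * Real.sqrt (N y ^ 2 + ε * ‖y‖ ^ 2) ^ 2) x ![v, v]) := by
  let p : Seminorm ℝ (EuclideanSpace ℝ (Fin n)) :=
    .of N hNt fun c x => by rw [hNs, Real.norm_eq_abs]
  let q := p.regularize ε hε.le
  refine ⟨p.regularize_eq_zero_iff hε, fun c x => ?_, map_add_le_add q, ?_, fun x hx v hv => ?_⟩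
  · rw [← Real.norm_eq_abs]
    exact map_smul_eq_mul q c x
  · exact (hNsm.add (contDiff_const.mul (contDiff_norm_sq ℝ)).contDiffOn).congr
      fun x _ => p.regularize_sq hε.le x
  · have hpx : ContDiffAt ℝ 2 (fun y => p y ^ 2) x :=
      hNsm.contDiffAt (isOpen_compl_singleton.mem_nhds hx)
    exact (by positivity : 0 < ε * ‖v‖ ^ 2).trans_le
      (p.le_iteratedFDeriv_two_half_regularize_sq hε.le hpx v)

/-- Let `N` be a norm on `ℝⁿ` whose square is `C²` away from the origin, and for `ε > 0`
let `N_ε x = √(N x² + ε‖x‖₂²)`. Then `N_ε` is a norm, its square is `C²` away from the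
origin, and the Hessian of `x ↦ ½ N_ε x²` is positive definite at every nonzero point. -/
theorem stmt19 (n : ℕ) (N : EuclideanSpace ℝ (Fin n) → ℝ)
    (hN0 : ∀ x, N x = 0 ↔ x = 0)
    (hNs : ∀ (c : ℝ) x, N (c • x) = |c| * N x)
    (hNt : ∀ x y, N (x + y) ≤ N x + N y)
    (hNsm : ContDiffOn ℝ 2 (fun x => N x ^ 2) {(0 : EuclideanSpace ℝ (Fin n))}ᶜ)
    (ε : ℝ) (hε : 0 < ε) :
    (∀ x, Real.sqrt (N x ^ 2 + ε * ‖x‖ ^ 2) = 0 ↔ x = 0) ∧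
    (∀ (c : ℝ) x, Real.sqrt (N (c • x) ^ 2 + ε * ‖c • x‖ ^ 2) =
      |c| * Real.sqrt (N x ^ 2 + ε * ‖x‖ ^ 2)) ∧
    (∀ x y, Real.sqrt (N (x + y) ^ 2 + ε * ‖x + y‖ ^ 2) ≤
      Real.sqrt (N x ^ 2 + ε * ‖x‖ ^ 2) + Real.sqrt (N y ^ 2 + ε * ‖y‖ ^ 2)) ∧
    ContDiffOn ℝ 2 (fun x => Real.sqrt (N x ^ 2 + ε * ‖x‖ ^ 2) ^ 2)
      {(0 : EuclideanSpace ℝ (Fin n))}ᶜ ∧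
    (∀ x : EuclideanSpace ℝ (Fin n), x ≠ 0 → ∀ v : EuclideanSpace ℝ (Fin n), v ≠ 0 →
      0 < iteratedFDeriv ℝ 2
            (fun y => (1 / 2 : ℝ) * Real.sqrt (N y ^ 2 + ε * ‖y‖ ^ 2) ^ 2) x ![v, v]) :=
  stmt19_general n N hNs hNt hNsm ε hε
end
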